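/- arXiv:2211.03559 — 11 statements merged into one kernel-verified Lean document; each statement's English description precedes it below -/
import Mathlib

section
/- Let R be a left perfect ring and T an R-module such that Hom_R(P,T) ≠ 0 for every nonzero projective R-module P. Then for every simple R-module S there exist an R-module Y, a surjection T ↠ Y, and an injection S ↪ Y. -/
open CategoryTheory CategoryTheory.Limits

universe u

noncomputable section

variable {R : Type u} [Ring R]

/-- The direct sum of `J` copies of `T`. -/
def copies (T : ModuleCat.{u} R) (J : Type u) : ModuleCat.{u} R :=
  ModuleCat.of R (J →₀ T)

/-- `X` belongs to `Gen T`: it is a quotient of a direct sum of copies of `T`. -/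
def MemGen (T X : ModuleCat.{u} R) : Prop :=
  ∃ (J : Type u) (f : copies T J ⟶ X), Function.Surjective f

/-- `Y` belongs to `Add T`: it is a direct summand of a direct sum of copies of `T`. -/
def MemAdd (T Y : ModuleCat.{u} R) : Prop :=
  ∃ (J : Type u) (s : Y ⟶ copies T J) (r : copies T J ⟶ Y), s ≫ r = 𝟙 Y

/-- `X` belongs to `Pres T`: there is an exact sequence `T₁ → T₀ → X → 0` with
`T₁, T₀ ∈ Add T`. -/
def MemPres (T X : ModuleCat.{u} R) : Prop :=
  ∃ (T₁ T₀ : ModuleCat.{u} R) (f : T₁ ⟶ T₀) (g : T₀ ⟶ X),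
    MemAdd T T₁ ∧ MemAdd T T₀ ∧ Function.Surjective g ∧ LinearMap.range f.hom = LinearMap.ker g.hom

/-- Vanishing of `Ext^n(T, M)`. -/
def ExtVanish (n : ℕ) (T M : ModuleCat.{u} R) : Prop :=
  Subsingleton (((Ext ℤ (ModuleCat.{u} R) n).obj (Opposite.op T)).obj M)

/-- `Hom_R(T, M) = 0`. -/
def HomZero (T M : ModuleCat.{u} R) : Prop := ∀ f : T ⟶ M, f = 0

/-- `T` is sincere: `Hom_R(P, T) ≠ 0` for every nonzero projective `P`. -/
def Sincere (T : ModuleCat.{u} R) : Prop :=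
  ∀ P : ModuleCat.{u} R, Projective P → Nontrivial P → ∃ f : P ⟶ T, f ≠ 0

/-- `T` is cosincere: `Hom_R(T, I) ≠ 0` for every nonzero injective `I`. -/
def Cosincere (T : ModuleCat.{u} R) : Prop :=
  ∀ I : ModuleCat.{u} R, Injective I → Nontrivial I → ∃ f : T ⟶ I, f ≠ 0

/-- `M` has a projective cover: a surjection `P ↠ M` from a projective which is a
minimal epimorphism. -/
def HasProjCover (M : ModuleCat.{u} R) : Prop :=
  ∃ (P : ModuleCat.{u} R) (f : P ⟶ M), Projective P ∧ Function.Surjective f ∧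
    ∀ (N : ModuleCat.{u} R) (g : N ⟶ P), Function.Surjective (g ≫ f) → Function.Surjective g

/-- `R` is a (two-sided) perfect ring: every left and every right module has a
projective cover. -/
def IsPerfect (R : Type u) [Ring R] : Prop :=
  (∀ M : ModuleCat.{u} R, HasProjCover M) ∧ (∀ M : ModuleCat.{u} Rᵐᵒᵖ, HasProjCover M)

/-- `X ∈ D_σ`: the map `Hom_R(σ, X)` is surjective. -/
def MemD {P₁ P₀ : ModuleCat.{u} R} (σ : P₁ ⟶ P₀) (X : ModuleCat.{u} R) : Prop :=
  ∀ g : P₁ ⟶ X, ∃ h : P₀ ⟶ X, σ ≫ h = g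

/-- `T` is presilting: it has a projective presentation `σ` with `Gen T ⊆ D_σ`. -/
def IsPresilting (T : ModuleCat.{u} R) : Prop :=
  ∃ (P₁ P₀ : ModuleCat.{u} R) (σ : P₁ ⟶ P₀) (π : P₀ ⟶ T),
    Projective P₁ ∧ Projective P₀ ∧ Function.Surjective π ∧
    LinearMap.range σ.hom = LinearMap.ker π.hom ∧ ∀ X, MemGen T X → MemD σ X

/-- `T` is silting: it has a projective presentation `σ` with `Gen T = D_σ`. -/
def IsSilting (T : ModuleCat.{u} R) : Prop :=
  ∃ (P₁ P₀ : ModuleCat.{u} R) (σ : P₁ ⟶ P₀) (π : P₀ ⟶ T),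
    Projective P₁ ∧ Projective P₀ ∧ Function.Surjective π ∧
    LinearMap.range σ.hom = LinearMap.ker π.hom ∧ ∀ X, MemGen T X ↔ MemD σ X

/-- Projective dimension at most `n`. -/
def PdLE : ℕ → ModuleCat.{u} R → Prop
  | 0, T => Projective T
  | n + 1, T => ∃ (P : ModuleCat.{u} R) (f : P ⟶ T), Projective P ∧ Function.Surjective f ∧
      PdLE n (ModuleCat.of R (LinearMap.ker f.hom))

/-- `T` is pretilting: `pd T ≤ 1` and `Ext¹(T, T^(J)) = 0` for all sets `J`. -/
def IsPretilting (T : ModuleCat.{u} R) : Prop :=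
  PdLE 1 T ∧ ∀ J : Type u, ExtVanish 1 T (copies T J)

/-- `T` is tilting: `Gen T = Ker Ext¹(T, -)`. -/
def IsTilting (T : ModuleCat.{u} R) : Prop :=
  ∀ X : ModuleCat.{u} R, MemGen T X ↔ ExtVanish 1 T X

/-- The vanishing condition (T3)′. -/
def VanishT3' (T : ModuleCat.{u} R) : Prop :=
  ∀ M : ModuleCat.{u} R, HomZero T M → ExtVanish 1 T M → Subsingleton M

end

/-- over a left perfect ring, a sincere module `T` has every simple module
in `Subfac T`. -/
theorem stmt_0 {R : Type u} [Ring R]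
    (hperf : ∀ M : ModuleCat.{u} R, HasProjCover M)
    (T : ModuleCat.{u} R) (hT : Sincere T) :
    ∀ S : ModuleCat.{u} R, IsSimpleModule R S →
      ∃ (Y : ModuleCat.{u} R) (p : T ⟶ Y) (i : S ⟶ Y),
        Function.Surjective p ∧ Function.Injective i := by
  intro S hS
  haveI := hS
  haveI : Nontrivial S := IsSimpleModule.nontrivial R S
  obtain ⟨P, p, hPproj, hps, hmin⟩ := hperf S
  have hPnt : Nontrivial P := by
    rcases exists_ne (0 : S) with ⟨s, hs⟩
    rcases hps s with ⟨x, hx⟩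
    exact ⟨x, 0, fun h => hs (by rw [← hx, h, map_zero])⟩
  obtain ⟨f, hf⟩ := hT P hPproj hPnt
  set W : Submodule R T := (LinearMap.ker p.hom).map f.hom with hW
  let Y := ModuleCat.of R (T ⧸ W)
  let q : T ⟶ Y := ModuleCat.ofHom W.mkQ
  have hq : Function.Surjective q := Submodule.mkQ_surjective W
  have hker : LinearMap.ker p.hom ≤
      LinearMap.ker (W.mkQ ∘ₗ f.hom) := by
    intro x hx
    simp only [LinearMap.mem_ker, LinearMap.comp_apply, Submodule.mkQ_apply,
      Submodule.Quotient.mk_eq_zero]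
    exact Submodule.mem_map_of_mem hx
  let e := LinearMap.quotKerEquivOfSurjective p.hom hps
  let i₀ : (P ⧸ LinearMap.ker p.hom) →ₗ[R] Y :=
    (LinearMap.ker p.hom).liftQ (W.mkQ ∘ₗ f.hom) hker
  let i : S ⟶ Y := ModuleCat.ofHom (i₀ ∘ₗ (e.symm : S →ₗ[R] _))
  refine ⟨Y, q, i, hq, ?_⟩
  rcases eq_bot_or_eq_top (LinearMap.ker i.hom) with h | h
  · exact LinearMap.ker_eq_bot.mp h
  · exfalso
    have hfW : ∀ x : P, f x ∈ W := by
      intro x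
      have h1 : i.hom = 0 := LinearMap.ker_eq_top.mp h
      have h2 : i₀ (Submodule.Quotient.mk x) = 0 := by
        have h3 : (i₀ ∘ₗ (e.symm : S →ₗ[R] _)) (e (Submodule.Quotient.mk x)) = 0 :=
          congrArg (fun g : S →ₗ[R] Y => g (e (Submodule.Quotient.mk x))) h1
        simpa using h3
      simp only [i₀, Submodule.liftQ_apply, LinearMap.comp_apply, Submodule.mkQ_apply,
        Submodule.Quotient.mk_eq_zero] at h2
      exact (Submodule.Quotient.mk_eq_zero W).mp h2
    let N := ModuleCat.of R (LinearMap.ker f.hom)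
    let g : N ⟶ P := ModuleCat.ofHom (LinearMap.ker f.hom).subtype
    have hgp : Function.Surjective (g ≫ p) := by
      intro s
      rcases hps s with ⟨x, hx⟩
      rcases hfW x with ⟨k, hk, hfk⟩
      refine ⟨⟨x - k, ?_⟩, ?_⟩
      · simp [LinearMap.mem_ker, map_sub, hfk]
      · have : p (x - k) = s := by
          rw [map_sub]
          have hk0 : p k = 0 := hk
          rw [hk0, sub_zero, hx]
        exact this
    have hg := hmin N g hgp
    apply hf
    apply ModuleCat.hom_ext
    apply LinearMap.ext
    intro x
    rcases hg x with ⟨⟨y, hy⟩, rfl⟩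
    exact hy
end

section
/- Let R be a ring with the property that every nonzero R-module has a maximal submodule, and let T be an R-module such that for every simple R-module S there exist Y with a surjection T ↠ Y and an injection S ↪ Y. Then Hom_R(P,T) ≠ 0 for every nonzero projective R-module P. -/
open CategoryTheory CategoryTheory.Limits

universe u

/-- if every nonzero module has a maximal submodule and every simple module
lies in `Subfac T`, then `T` is sincere. -/
theorem stmt_1 {R : Type u} [Ring R]
    (hmax : ∀ M : ModuleCat.{u} R, Nontrivial M → ∃ N : Submodule R M, IsCoatom N)
    (T : ModuleCat.{u} R)
    (hT : ∀ S : ModuleCat.{u} R, IsSimpleModule R S →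
      ∃ (Y : ModuleCat.{u} R) (p : T ⟶ Y) (i : S ⟶ Y),
        Function.Surjective p ∧ Function.Injective i) :
    ∀ P : ModuleCat.{u} R, Projective P → Nontrivial P → ∃ f : P ⟶ T, f ≠ 0 := by
  intro P hP hPnt
  obtain ⟨N, hN⟩ := hmax P hPnt
  have hsimple : IsSimpleModule R (P ⧸ N) :=
    (isSimpleModule_iff_isCoatom (m := N)).mpr hN
  obtain ⟨Y, p, i, hp, hi⟩ := hT (ModuleCat.of R (P ⧸ N)) hsimple
  -- the composite P → P/N → Y is nonzero
  let q : P ⟶ ModuleCat.of R (P ⧸ N) := ModuleCat.ofHom N.mkQ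
  have hgne : q ≫ i ≠ 0 := by
    obtain ⟨x, hx⟩ : ∃ x : P, x ∉ N := by
      by_contra h
      push_neg at h
      exact hN.1 (top_le_iff.mp fun y _ => h y)
    intro h
    have : i (N.mkQ x) = 0 := by simpa [q] using congrArg (fun f => f.hom x) h
    have : N.mkQ x = 0 := hi (by simpa using this)
    exact hx ((Submodule.Quotient.mk_eq_zero N).mp this)
  haveI : Epi p := (ModuleCat.epi_iff_surjective p).mpr hp
  refine ⟨Projective.factorThru (q ≫ i) p, fun h => ?_⟩
  apply hgne
  rw [← Projective.factorThru_comp (q ≫ i) p, h, zero_comp]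
end

section
/- Let R be a ring with the property that every nonzero R-module has a maximal submodule, and let T be an R-module such that for every simple R-module S there exist an R-module M, a surjection M ↠ S, and an injection M ↪ T. Then Hom_R(P,T) ≠ 0 for every nonzero projective R-module P. -/
open CategoryTheory CategoryTheory.Limits

universe u

/-- if every nonzero module has a maximal submodule and every simple module
lies in `Facsub T`, then `T` is sincere. -/
theorem stmt_2 {R : Type u} [Ring R]
    (hmax : ∀ M : ModuleCat.{u} R, Nontrivial M → ∃ N : Submodule R M, IsCoatom N)
    (T : ModuleCat.{u} R)
    (hT : ∀ S : ModuleCat.{u} R, IsSimpleModule R S →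
      ∃ (M : ModuleCat.{u} R) (p : M ⟶ S) (i : M ⟶ T),
        Function.Surjective p ∧ Function.Injective i) :
    ∀ P : ModuleCat.{u} R, Projective P → Nontrivial P → ∃ f : P ⟶ T, f ≠ 0 := by
  intro P hP hPnt
  obtain ⟨N, hN⟩ := hmax P hPnt
  have hsimple : IsSimpleModule R (P ⧸ N) :=
    (isSimpleModule_iff_isCoatom (m := N)).mpr hN
  obtain ⟨M, p, i, hp, hi⟩ := hT (ModuleCat.of R (P ⧸ N)) hsimple
  haveI := hP
  haveI : Epi p := (ModuleCat.epi_iff_surjective p).mpr hp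
  set q : P ⟶ ModuleCat.of R (P ⧸ N) := ModuleCat.ofHom N.mkQ with hq
  set g : P ⟶ M := Projective.factorThru q p with hg
  have hfac : g ≫ p = q := Projective.factorThru_comp q p
  have hgne : g ≠ 0 := by
    intro h0
    have hq0 : q = 0 := by rw [← hfac, h0, Limits.zero_comp]
    have hqs : Function.Surjective q := N.mkQ_surjective
    haveI := Submodule.Quotient.nontrivial_iff.mpr hN.1
    obtain ⟨x, y, hxy⟩ : ∃ x y : (P ⧸ N), x ≠ y := exists_pair_ne _
    obtain ⟨a, ha⟩ := hqs x
    obtain ⟨b, hb⟩ := hqs y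
    apply hxy
    rw [← ha, ← hb, hq0]; rfl
  refine ⟨g ≫ i, fun h0 => hgne ?_⟩
  haveI : Mono i := (ModuleCat.mono_iff_injective i).mpr hi
  exact (cancel_mono i).mp (by rw [h0, Limits.zero_comp])
end

section
/- Let R be a ring and T an R-module such that Hom_R(T,I) ≠ 0 for every nonzero injective R-module I. Then for every simple R-module S there exist an R-module M, a surjection M ↠ S, and an injection M ↪ T. -/
open CategoryTheory CategoryTheory.Limits

universe u

/-- a cosincere module `T` has every simple module in `Facsub T`. -/
theorem stmt_3 {R : Type u} [Ring R]
    (T : ModuleCat.{u} R) (hT : Cosincere T) :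
    ∀ S : ModuleCat.{u} R, IsSimpleModule R S →
      ∃ (M : ModuleCat.{u} R) (p : M ⟶ S) (i : M ⟶ T),
        Function.Surjective p ∧ Function.Injective i := by
  intro S hS
  classical
  -- Embed `S` into an injective module `I`.
  set I : ModuleCat.{u} R := Injective.under S with hIdef
  have jmono : Mono (Injective.ι S) := inferInstance
  set j : S →ₗ[R] I := (Injective.ι S : S ⟶ I).hom with hjdef
  have hj : Function.Injective j := by
    rw [← ModuleCat.mono_iff_injective (Injective.ι S : S ⟶ I)]; exact jmono
  set S' : Submodule R I := LinearMap.range j with hS'def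
  have hS'simple : IsSimpleModule R ↥S' :=
    IsSimpleModule.congr (LinearEquiv.ofInjective j hj).symm
  have hatom : IsAtom S' := isSimpleModule_iff_isAtom.mp hS'simple
  have hS'le : ∀ K : Submodule R I, K ≤ S' → K ≠ ⊥ → K = S' := fun K hK hne =>
    (hatom.le_iff.mp hK).resolve_left hne
  -- `sSet` : essential extensions of `S'` in `I`.
  set sSet : Set (Submodule R I) :=
    {E | S' ≤ E ∧ ∀ x : I, x ∈ E → x ≠ 0 → S' ≤ Submodule.span R {x}} with hsSet
  have hspan : ∀ x : I, x ≠ 0 → Submodule.span R {x} ≠ ⊥ := by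
    intro x hx h
    have hm := Submodule.mem_span_singleton_self (R := R) x
    rw [h] at hm
    exact hx ((Submodule.mem_bot R).mp hm)
  have hS'mem : S' ∈ sSet := by
    refine ⟨le_rfl, fun x hx hx0 => ?_⟩
    have h1 : Submodule.span R {x} ≤ S' := by
      rw [Submodule.span_le, Set.singleton_subset_iff]; exact hx
    exact le_of_eq (hS'le _ h1 (hspan x hx0)).symm
  obtain ⟨E, -, hEmem, hEmax⟩ := zorn_le_nonempty₀ sSet (fun c hc hchain y hy => by
    refine ⟨sSup c, ?_, fun z hz => le_sSup hz⟩
    have hcne : c.Nonempty := ⟨y, hy⟩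
    have hdir : DirectedOn (· ≤ ·) c := hchain.directedOn
    constructor
    · exact le_trans (hc hy).1 (le_sSup hy)
    · intro x hx hx0
      obtain ⟨E, hEc, hxE⟩ := (Submodule.mem_sSup_of_directed hcne hdir).mp hx
      exact (hc hEc).2 x hxE hx0) S' hS'mem
  obtain ⟨hE1, hE2⟩ := hEmem
  -- `D` : maximal with `D ⊓ E = ⊥`.
  obtain ⟨D, -, hD, hDmax⟩ := zorn_le_nonempty₀ {D : Submodule R I | D ⊓ E = ⊥}
    (fun c hc hchain y hy => by
      refine ⟨sSup c, ?_, fun z hz => le_sSup hz⟩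
      have hcne : c.Nonempty := ⟨y, hy⟩
      have hdir : DirectedOn (· ≤ ·) c := hchain.directedOn
      show sSup c ⊓ E = ⊥
      rw [eq_bot_iff]
      intro x hx
      obtain ⟨hx1, hx2⟩ := hx
      obtain ⟨D', hD'c, hxD'⟩ := (Submodule.mem_sSup_of_directed hcne hdir).mp hx1
      have : x ∈ D' ⊓ E := ⟨hxD', hx2⟩
      rw [hc hD'c] at this
      exact this) ⊥ (bot_inf_eq E)
  -- The quotient map and the factorization through the injective `I`.
  set q : I →ₗ[R] (I ⧸ D) := D.mkQ with hqdef
  set Q : ModuleCat.{u} R := ModuleCat.of R (I ⧸ D) with hQdef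
  set Em : ModuleCat.{u} R := ModuleCat.of R ↥E with hEmdef
  set incl : Em ⟶ I := ModuleCat.ofHom E.subtype with hincl
  set u : Em ⟶ Q := ModuleCat.ofHom (q.comp E.subtype) with hudef
  have huinj : Function.Injective (q.comp E.subtype) := by
    intro a b hab
    have hab' : Submodule.Quotient.mk (p := D) (a : I) = Submodule.Quotient.mk (b : I) := hab
    have h1 : ((a : I) - (b : I)) ∈ D := (Submodule.Quotient.eq D).mp hab'
    have h2 : ((a : I) - (b : I)) ∈ D ⊓ E := ⟨h1, E.sub_mem a.2 b.2⟩
    rw [hD] at h2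
    exact Subtype.ext (sub_eq_zero.mp h2)
  have humono : Mono u := by
    rw [ModuleCat.mono_iff_injective]
    exact huinj
  have hIinj : Injective I := Injective.injective_under S
  set h : Q ⟶ I := Injective.factorThru incl u with hhdef
  have hfac : ∀ x : ↥E, h (q (x : I)) = (x : I) := by
    intro x
    have := Injective.comp_factorThru incl u
    calc h (q (x : I)) = (u ≫ h) x := rfl
    _ = incl x := by rw [this]
    _ = (x : I) := rfl
  set hcomp : I →ₗ[R] I := h.hom.comp q with hhc
  -- Essentiality of `q(E)` in `I ⧸ D` (elementwise, via maximality of `D`).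
  have hess : ∀ z : I ⧸ D, z ≠ 0 → ∃ w : I, w ∈ E ∧ w ≠ 0 ∧ q w ∈ Submodule.span R {z} := by
    intro z hz
    set D' : Submodule R I := Submodule.comap q (Submodule.span R {z}) with hD'
    have hDD' : D ≤ D' := by
      intro d hd
      have : q d = 0 := by
        rw [hqdef, Submodule.mkQ_apply]
        exact (Submodule.Quotient.mk_eq_zero D).mpr hd
      simp only [hD', Submodule.mem_comap, this]
      exact Submodule.zero_mem _
    have hne : D' ⊓ E ≠ ⊥ := by
      intro hbot
      obtain ⟨x, hxq⟩ := Submodule.mkQ_surjective D z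
      have hxD' : x ∈ D' := by
        simp only [hD', Submodule.mem_comap]
        rw [show q x = z from hxq]
        exact Submodule.mem_span_singleton_self z
      have hD'le : D' ≤ D := hDmax hbot hDD'
      have hxD : x ∈ D := hD'le hxD'
      apply hz
      rw [← hxq, Submodule.mkQ_apply]
      exact (Submodule.Quotient.mk_eq_zero D).mpr hxD
    obtain ⟨w, hw, hw0⟩ := Submodule.ne_bot_iff _ |>.mp hne
    exact ⟨w, hw.2, hw0, hw.1⟩
  -- `range hcomp` is an essential extension of `S'` containing `E`; by maximality it is `E`.
  have hErange : E ≤ LinearMap.range hcomp := by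
    intro x hx
    exact ⟨x, hfac ⟨x, hx⟩⟩
  have hrangemem : LinearMap.range hcomp ∈ sSet := by
    constructor
    · exact le_trans hE1 hErange
    · rintro y ⟨x, rfl⟩ hy0
      have hz : q x ≠ 0 := by
        intro h0
        apply hy0
        show h (q x) = 0
        rw [h0]; exact map_zero _
      obtain ⟨w, hwE, hw0, hwspan⟩ := hess (q x) hz
      obtain ⟨r, hr⟩ := Submodule.mem_span_singleton.mp hwspan
      have key : r • hcomp x = w := by
        have : h (q w) = w := hfac ⟨w, hwE⟩
        calc r • hcomp x = h (r • q x) := (map_smul h.hom r (q x)).symm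
        _ = h (q w) := by rw [hr]
        _ = w := this
      have hwspan' : w ∈ Submodule.span R {hcomp x} := by
        rw [← key]
        exact Submodule.smul_mem _ r (Submodule.mem_span_singleton_self _)
      calc S' ≤ Submodule.span R {w} := hE2 w hwE hw0
      _ ≤ Submodule.span R {hcomp x} := by
        rw [Submodule.span_le, Set.singleton_subset_iff]; exact hwspan'
  have hrangeE : LinearMap.range hcomp = E :=
    le_antisymm (hEmax hrangemem hErange) hErange
  -- The retraction `I → E`.
  set ρ : I →ₗ[R] ↥E := LinearMap.codRestrict E hcomp
    (fun x => hrangeE ▸ ⟨x, rfl⟩) with hρ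
  have hρid : ∀ x : ↥E, ρ (x : I) = x := by
    intro x
    apply Subtype.ext
    show hcomp (x : I) = (x : I)
    exact hfac x
  set ρhom : I ⟶ Em := ModuleCat.ofHom ρ with hρhom
  -- `Em` is injective.
  haveI hEminj : Injective Em := by
    constructor
    intro A B g f hmono
    refine ⟨Injective.factorThru (g ≫ incl) f ≫ ρhom, ?_⟩
    rw [← Category.assoc, Injective.comp_factorThru]
    apply ModuleCat.hom_ext
    apply LinearMap.ext
    intro a
    show ρ (incl (g a)) = g a
    exact hρid (g a)
  -- `Em` is nontrivial.
  obtain ⟨s, hsS', hs0⟩ := Submodule.ne_bot_iff _ |>.mp hatom.1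
  haveI hEmnt : Nontrivial ↥Em := ⟨⟨⟨s, hE1 hsS'⟩, 0, by
    intro hcon
    exact hs0 (by simpa using congrArg Subtype.val hcon)⟩⟩
  -- Apply cosincerity.
  obtain ⟨f, hf⟩ := hT Em hEminj hEmnt
  set f' : T →ₗ[R] ↥E := f.hom with hf'def
  set g : T →ₗ[R] I := E.subtype.comp f' with hgdef
  have hgt : ∃ t : T, g t ≠ 0 := by
    by_contra hcon
    push_neg at hcon
    apply hf
    apply ModuleCat.hom_ext
    show f' = 0
    apply LinearMap.ext
    intro t
    exact Subtype.ext (hcon t)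
  obtain ⟨t, hgt0⟩ := hgt
  have hgtE : g t ∈ E := (f' t).2
  have hS'range : S' ≤ LinearMap.range g := by
    calc S' ≤ Submodule.span R {g t} := hE2 (g t) hgtE hgt0
    _ ≤ LinearMap.range g := by
      rw [Submodule.span_le, Set.singleton_subset_iff]; exact ⟨t, rfl⟩
  -- Construct `M`, the surjection to `S` and the inclusion into `T`.
  set M₀ : Submodule R T := Submodule.comap g S' with hM₀
  refine ⟨ModuleCat.of R ↥M₀, ?_, ModuleCat.ofHom M₀.subtype, ?_, Submodule.injective_subtype M₀⟩
  · -- the map to `S`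
    exact ModuleCat.ofHom ((LinearEquiv.ofInjective j hj).symm.toLinearMap.comp
      (LinearMap.codRestrict S' (g.comp M₀.subtype) (fun m => m.2)))
  · -- surjectivity
    apply Function.Surjective.comp (LinearEquiv.ofInjective j hj).symm.surjective
    intro s'
    obtain ⟨t', ht'⟩ := hS'range s'.2
    refine ⟨⟨t', ?_⟩, ?_⟩
    · show g t' ∈ S'
      rw [ht']; exact s'.2
    · exact Subtype.ext ht'
end

section
/- Let R be a ring with the property that every nonzero R-module has nonzero socle, and let T be an R-module such that for every simple R-module S there exist an R-module M with a surjection M ↠ S and an injection M ↪ T. Then Hom_R(T,I) ≠ 0 for every nonzero injective R-module I. -/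
open CategoryTheory CategoryTheory.Limits

universe u

/-- if every nonzero module has nonzero socle and every simple module lies
in `Facsub T`, then `T` is cosincere. -/
theorem stmt_4 {R : Type u} [Ring R]
    (hsoc : ∀ M : ModuleCat.{u} R, Nontrivial M →
      ∃ S : Submodule R M, IsSimpleModule R S)
    (T : ModuleCat.{u} R)
    (hT : ∀ S : ModuleCat.{u} R, IsSimpleModule R S →
      ∃ (M : ModuleCat.{u} R) (p : M ⟶ S) (i : M ⟶ T),
        Function.Surjective p ∧ Function.Injective i) :
    ∀ I : ModuleCat.{u} R, Injective I → Nontrivial I → ∃ f : T ⟶ I, f ≠ 0 := by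
  intro I hI hnt
  obtain ⟨S, hS⟩ := hsoc I hnt
  obtain ⟨M, p, i, hp, hi⟩ := hT (ModuleCat.of R S) hS
  -- inclusion of S into I
  let ι : ModuleCat.of R S ⟶ I := ModuleCat.ofHom S.subtype
  have hmono : Mono i := (ModuleCat.mono_iff_injective i).mpr hi
  refine ⟨Injective.factorThru (p ≫ ι) i, ?_⟩
  intro hzero
  have hfac : i ≫ Injective.factorThru (p ≫ ι) i = p ≫ ι :=
    Injective.comp_factorThru (p ≫ ι) i
  rw [hzero, Limits.comp_zero] at hfac
  -- pick a nonzero element of S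
  haveI : Nontrivial S := IsSimpleModule.nontrivial R S
  obtain ⟨s, hs⟩ := exists_ne (0 : S)
  obtain ⟨m, hm⟩ := hp s
  have : ι (p m) = 0 := by
    have := congrArg (fun g => g m) hfac
    simpa using this.symm
  rw [hm] at this
  have : (s : I) = 0 := this
  exact hs (Subtype.ext this)
end

section
/- Let R be a ring with the property that every nonzero R-module has nonzero socle, and let T be an R-module such that for every simple R-module S there exist Y with a surjection T ↠ Y and an injection S ↪ Y. Then Hom_R(T,I) ≠ 0 for every nonzero injective R-module I. -/
open CategoryTheory CategoryTheory.Limits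

universe u

/-- if every nonzero module has nonzero socle and every simple module lies
in `Subfac T`, then `T` is cosincere. -/
theorem stmt_5 {R : Type u} [Ring R]
    (hsoc : ∀ M : ModuleCat.{u} R, Nontrivial M →
      ∃ S : Submodule R M, IsSimpleModule R S)
    (T : ModuleCat.{u} R)
    (hT : ∀ S : ModuleCat.{u} R, IsSimpleModule R S →
      ∃ (Y : ModuleCat.{u} R) (p : T ⟶ Y) (i : S ⟶ Y),
        Function.Surjective p ∧ Function.Injective i) :
    ∀ I : ModuleCat.{u} R, Injective I → Nontrivial I → ∃ f : T ⟶ I, f ≠ 0 := by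
  intro I hI hnt
  obtain ⟨S, hS⟩ := hsoc I hnt
  obtain ⟨Y, p, i, hp, hi⟩ := hT (ModuleCat.of R S) hS
  haveI : Mono i := (ModuleCat.mono_iff_injective i).mpr hi
  -- inclusion S ⟶ I
  let ι : ModuleCat.of R S ⟶ I := ModuleCat.ofHom S.subtype
  let h : Y ⟶ I := Injective.factorThru ι i
  refine ⟨p ≫ h, ?_⟩
  haveI : Nontrivial S := by
    obtain ⟨⟨a, b, hab⟩⟩ := (IsSimpleModule.nontrivial R S)
    exact ⟨a, b, hab⟩
  obtain ⟨s, hs⟩ := exists_ne (0 : S)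
  obtain ⟨t, ht⟩ := hp (i s)
  intro hf
  have h0 : (p ≫ h) t = 0 := by rw [hf]; rfl
  have : h (i s) = ι s := by
    have := Injective.comp_factorThru ι i
    calc h (i s) = (i ≫ h) s := rfl
    _ = ι s := by rw [this]
  apply hs
  have : (s : I) = 0 := by
    have h1 : (p ≫ h) t = h (p t) := rfl
    rw [h1, ht] at h0
    rw [this] at h0
    exact h0
  exact Subtype.ext this
end

section
/- Let R be a perfect ring. An R-module T is sincere if and only if the only R-module X with Hom_R(X,G) = 0 for all G ∈ Gen T is X = 0. -/
open CategoryTheory CategoryTheory.Limits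

universe u

/-- over a perfect ring, `T` is sincere iff `⊥₀(Gen T) = 0`. -/
theorem stmt_11 {R : Type u} [Ring R] (hR : IsPerfect R) (T : ModuleCat.{u} R) :
    Sincere T ↔
      ∀ X : ModuleCat.{u} R,
        (∀ G : ModuleCat.{u} R, MemGen T G → ∀ f : X ⟶ G, f = 0) → Subsingleton X := by
  constructor
  · intro hS X hX
    by_contra hns
    have hXnt : Nontrivial X := (subsingleton_or_nontrivial X).resolve_left hns
    obtain ⟨P, p, hP, hps, hmin⟩ := hR.1 X
    have hPnt : Nontrivial P := by
      obtain ⟨x, y, hxy⟩ := hXnt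
      obtain ⟨a, ha⟩ := hps x
      obtain ⟨b, hb⟩ := hps y
      exact ⟨a, b, fun h => hxy (by rw [← ha, ← hb, h])⟩
    obtain ⟨f, hf⟩ := hS P hP hPnt
    set V : Submodule R T := (LinearMap.ker p.hom).map f.hom with hV
    set G : ModuleCat.{u} R := ModuleCat.of R (T ⧸ V) with hGdef
    have hG : MemGen T G := by
      refine ⟨PUnit, ModuleCat.ofHom (V.mkQ ∘ₗ Finsupp.lapply PUnit.unit), ?_⟩
      intro z
      obtain ⟨t, rfl⟩ := V.mkQ_surjective z
      refine ⟨Finsupp.single PUnit.unit t, ?_⟩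
      show V.mkQ (Finsupp.lapply PUnit.unit (Finsupp.single PUnit.unit t)) = _
      simp
    have hle : LinearMap.ker p.hom ≤ LinearMap.ker (V.mkQ ∘ₗ f.hom) := by
      intro y hy
      simp only [LinearMap.mem_ker, LinearMap.comp_apply, Submodule.mkQ_apply,
        Submodule.Quotient.mk_eq_zero]
      exact ⟨y, hy, rfl⟩
    let e := LinearMap.quotKerEquivOfSurjective p.hom hps
    let g : X ⟶ G := ModuleCat.ofHom
      (((LinearMap.ker p.hom).liftQ (V.mkQ ∘ₗ f.hom) hle) ∘ₗ (e.symm : X →ₗ[R] P ⧸ LinearMap.ker p.hom))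
    have hcomp : ∀ y : P, g (p y) = V.mkQ (f y) := by
      intro y
      have he : e.symm (p y) = Submodule.Quotient.mk y := by
        apply e.injective
        simp [e, LinearMap.quotKerEquivOfSurjective, LinearMap.quotKerEquivRange]
      show ((LinearMap.ker p.hom).liftQ (V.mkQ ∘ₗ f.hom) hle) (e.symm (p y)) = _
      rw [he]
      simp
    have hg0 : g = 0 := hX G hG g
    have key : ∀ y : P, ∃ k ∈ LinearMap.ker p.hom, f k = f y := by
      intro y
      have : V.mkQ (f y) = 0 := by
        rw [← hcomp y, hg0]; rfl
      rw [Submodule.mkQ_apply, Submodule.Quotient.mk_eq_zero] at this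
      obtain ⟨k, hk, hk2⟩ := this
      exact ⟨k, hk, hk2⟩
    let N : ModuleCat.{u} R := ModuleCat.of R (LinearMap.ker f.hom)
    let ι : N ⟶ P := ModuleCat.ofHom (LinearMap.ker f.hom).subtype
    have hsurj : Function.Surjective (ι ≫ p) := by
      intro x
      obtain ⟨y, rfl⟩ := hps x
      obtain ⟨k, hk, hk2⟩ := key y
      refine ⟨⟨y - k, by simp [LinearMap.mem_ker, hk2]⟩, ?_⟩
      show p.hom (y - k) = p.hom y
      rw [map_sub, hk, sub_zero]
    have := hmin N ι hsurj
    apply hf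
    ext y
    obtain ⟨⟨z, hz⟩, hz2⟩ := this y
    have : (z : P) = y := hz2
    rw [← this]
    exact hz
  · intro h P hP hPnt
    by_contra hf
    push_neg at hf
    have : Subsingleton P := by
      apply h P
      intro G hG g
      obtain ⟨J, q, hq⟩ := hG
      have : Epi q := (ModuleCat.epi_iff_surjective q).2 hq
      have hfac := Projective.factorThru_comp g q
      set l := Projective.factorThru g q with hl
      have hl0 : l = 0 := by
        ext x
        apply Finsupp.ext
        intro j
        have := hf (l ≫ ModuleCat.ofHom (Finsupp.lapply j : (J →₀ T) →ₗ[R] T))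
        have h2 := congrArg (fun φ : P ⟶ T => φ.hom x) this
        exact h2
      rw [← hfac, hl0, Limits.zero_comp]
    exact (not_subsingleton P) this
end

section
/- Let R be a perfect ring and T a sincere R-module. Then T is pretilting (i.e., has projective dimension at most 1 and Ext^1_R(T, T^(J)) = 0 for all sets J) if and only if Ext^1_R(T,X) = 0 = Ext^2_R(T,X) for all X ∈ Gen T. -/
open CategoryTheory CategoryTheory.Limits

universe u

-- ===================== auxiliary development =====================
noncomputable section Aux

universe v w

lemma subsingleton_iff_of_iso {S : Type w} [Ring S] {A B : ModuleCat.{v} S} (e : A ≅ B) :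
    Subsingleton A ↔ Subsingleton B := e.toLinearEquiv.toEquiv.subsingleton_congr

lemma subsingleton_iff_isZero {S : Type w} [Ring S] (A : ModuleCat.{v} S) :
    Subsingleton A ↔ IsZero A := by
  constructor
  · intro h; exact ModuleCat.isZero_of_subsingleton _
  · intro h
    constructor
    intro x y
    have h1 : (𝟙 A) = (0 : A ⟶ A) := h.eq_of_src _ _
    have h0 : ∀ z : A, (0 : A ⟶ A) z = 0 := by
      intro z
      show (0 : A →ₗ[S] A) z = 0
      simp
    have h2 : x = (0 : A ⟶ A) x := by conv_lhs => rw [show x = (𝟙 A) x from rfl, h1]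
    have h3 : y = (0 : A ⟶ A) y := by conv_lhs => rw [show y = (𝟙 A) y from rfl, h1]
    rw [h2, h3, h0, h0]

variable {R : Type u} [Ring R]

lemma extVanish_iff_exactAt (T M : ModuleCat.{u} R) (Pr : ProjectiveResolution T) (n : ℕ) :
    Subsingleton (((Ext ℤ (ModuleCat.{u} R) n).obj (Opposite.op T)).obj M) ↔
      (Pr.complex.linearYonedaObj ℤ M).ExactAt n := by
  rw [HomologicalComplex.exactAt_iff_isZero_homology,
    subsingleton_iff_of_iso (Pr.isoExt n M (R := ℤ)), subsingleton_iff_isZero]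

lemma exactAt_iff_crit (T M : ModuleCat.{u} R) (Pr : ProjectiveResolution T) (n : ℕ) :
    (Pr.complex.linearYonedaObj ℤ M).ExactAt (n+1) ↔
      ∀ g : Pr.complex.X (n+1) ⟶ M, Pr.complex.d (n+2) (n+1) ≫ g = 0 →
        ∃ h : Pr.complex.X n ⟶ M, Pr.complex.d (n+1) n ≫ h = g := by
  rw [HomologicalComplex.exactAt_iff' _ n (n+1) (n+2) (by simp) (by simp)]
  rw [ShortComplex.moduleCat_exact_iff]
  constructor
  · intro H g hg
    obtain ⟨h, hh⟩ := H g (by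
      show ((Pr.complex.linearYonedaObj ℤ M).d (n+1) (n+2)) g = 0
      exact hg)
    exact ⟨h, hh⟩
  · intro H g hg
    obtain ⟨h, hh⟩ := H g hg
    refine ⟨h, ?_⟩
    show ((Pr.complex.linearYonedaObj ℤ M).d n (n+1)) h = g
    exact hh

def ExtProp {P A : ModuleCat.{u} R} (f : P ⟶ A) (M : ModuleCat.{u} R) : Prop :=
  ∀ φ : (LinearMap.ker f.hom) →ₗ[R] M, ∃ Φ : P ⟶ M, ∀ x : LinearMap.ker f.hom, Φ x.1 = φ x

lemma factor_thru_surjective {P B Z : ModuleCat.{u} R} (e : P ⟶ B) (g : P ⟶ Z)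
    (he : Function.Surjective e) (hk : LinearMap.ker e.hom ≤ LinearMap.ker g.hom) :
    ∃ φ : B ⟶ Z, ∀ x, φ (e x) = g x := by
  let eq := LinearMap.quotKerEquivOfSurjective e.hom he
  refine ⟨ModuleCat.ofHom ((LinearMap.ker e.hom).liftQ g.hom hk ∘ₗ eq.symm.toLinearMap), fun x => ?_⟩
  have h1 : eq.symm (e x) = Submodule.Quotient.mk x := by
    apply eq.injective
    simp [eq, LinearMap.quotKerEquivOfSurjective]
  show ((LinearMap.ker e.hom).liftQ g.hom hk) (eq.symm (e x)) = g x
  rw [h1, Submodule.liftQ_apply]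

/-- The core criterion: exactness criterion in terms of extension of maps from `range v`. -/
lemma crit_iff_extension {W2 W1 W0 M : ModuleCat.{u} R} (u : W2 ⟶ W1) (v : W1 ⟶ W0)
    (hker : LinearMap.ker v.hom = LinearMap.range u.hom) :
    (∀ g : W1 ⟶ M, u ≫ g = 0 → ∃ h : W0 ⟶ M, v ≫ h = g) ↔
      (∀ φ : (LinearMap.range v.hom) →ₗ[R] M, ∃ Φ : W0 ⟶ M,
        ∀ x : LinearMap.range v.hom, Φ x.1 = φ x) := by
  constructor
  · intro H φ
    obtain ⟨h, hh⟩ := H (ModuleCat.ofHom (φ ∘ₗ v.hom.rangeRestrict)) (by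
      ext x
      show φ (v.hom.rangeRestrict (u x)) = _
      have : v.hom.rangeRestrict (u x) = 0 := by
        ext
        simp only [LinearMap.rangeRestrict, LinearMap.codRestrict_apply]
        have : u x ∈ LinearMap.ker v.hom := hker ▸ LinearMap.mem_range_self u.hom x
        simpa using this
      rw [this, map_zero]
      rfl)
    refine ⟨h, fun x => ?_⟩
    obtain ⟨y, hy⟩ := x.2
    have hx : x = ⟨v y, LinearMap.mem_range_self v.hom y⟩ := by ext; exact hy.symm
    subst hx
    have := congrArg (fun (t : W1 ⟶ M) => t y) hh
    exact this
  · intro H g hg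
    have hk : LinearMap.ker v.hom.rangeRestrict ≤ LinearMap.ker g.hom := by
      intro x hx
      have hx' : x ∈ LinearMap.ker v.hom := by
        simpa [LinearMap.ker_rangeRestrict] using hx
      rw [hker] at hx'
      obtain ⟨y, hy⟩ := hx'
      have := congrArg (fun (t : W2 ⟶ M) => t y) hg
      replace this : g (u y) = 0 := this
      show g x = 0
      rw [← hy]
      exact this
    obtain ⟨φ, hφ⟩ := factor_thru_surjective (ModuleCat.ofHom v.hom.rangeRestrict) g
      v.hom.surjective_rangeRestrict hk
    obtain ⟨Φ, hΦ⟩ := H φ.hom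
    refine ⟨Φ, ?_⟩
    ext y
    show Φ (v y) = g y
    have h1 : Φ (v y) = Φ ((v.hom.rangeRestrict y).1) := rfl
    rw [h1, hΦ (v.hom.rangeRestrict y)]; exact hφ y

/-- Presentation independence of the extension property. -/
lemma extProp_transfer {P P' A M : ModuleCat.{u} R} (f : P ⟶ A) (f' : P' ⟶ A)
    (hP : Projective P) (hP' : Projective P')
    (hf : Function.Surjective f) (hf' : Function.Surjective f')
    (h : ExtProp f M) : ExtProp f' M := by
  haveI := hP; haveI := hP'
  haveI : Epi f := (ModuleCat.epi_iff_surjective f).2 hf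
  haveI : Epi f' := (ModuleCat.epi_iff_surjective f').2 hf'
  intro φ'
  -- β : P ⟶ P' with β ≫ f' = f;  α : P' ⟶ P with α ≫ f = f'
  set β := Projective.factorThru f f' with hβ
  have hβc : β ≫ f' = f := Projective.factorThru_comp f f'
  set α := Projective.factorThru f' f with hα
  have hαc : α ≫ f = f' := Projective.factorThru_comp f' f
  have hβk : ∀ x ∈ LinearMap.ker f.hom, β x ∈ LinearMap.ker f'.hom := by
    intro x hx
    have : f' (β x) = f x := congrArg (fun (t : P ⟶ A) => t x) hβc
    simp only [LinearMap.mem_ker] at hx ⊢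
    rw [this, hx]
  obtain ⟨Φ, hΦ⟩ := h (φ' ∘ₗ (β.hom.restrict hβk))
  -- ρ : P' →ₗ ker f',  x ↦ x - β (α x)
  have hρmem : ∀ x : P', x - β (α x) ∈ LinearMap.ker f'.hom := by
    intro x
    have h1 : f' (β (α x)) = f (α x) := congrArg (fun (t : P ⟶ A) => t (α x)) hβc
    have h2 : f (α x) = f' x := congrArg (fun (t : P' ⟶ A) => t x) hαc
    simp only [LinearMap.mem_ker, map_sub, h1, h2, sub_self]
  let ρ : P' →ₗ[R] LinearMap.ker f'.hom :=
    LinearMap.codRestrict (LinearMap.ker f'.hom) (LinearMap.id - (β.hom.comp α.hom)) hρmem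
  refine ⟨ModuleCat.ofHom (Φ.hom.comp α.hom + φ' ∘ₗ ρ), fun x => ?_⟩
  have hαk : α x.1 ∈ LinearMap.ker f.hom := by
    have h2 : f (α x.1) = f' x.1 := congrArg (fun (t : P' ⟶ A) => t x.1) hαc
    simp only [LinearMap.mem_ker, h2]
    simpa using x.2
  show Φ (α x.1) + φ' (ρ x.1) = φ' x
  rw [hΦ ⟨α x.1, hαk⟩]
  have : (β.hom.restrict hβk) ⟨α x.1, hαk⟩ + ρ x.1 = x := by
    ext
    simp [ρ, LinearMap.restrict_apply]
  show φ' ((LinearMap.restrict β.hom hβk) ⟨α x.1, hαk⟩) + φ' (ρ x.1) = φ' x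
  rw [← map_add, this]

lemma projective_prod {A B : ModuleCat.{u} R} (hA : Projective A) (hB : Projective B) :
    Projective (ModuleCat.of R (↥A × ↥B)) := by
  haveI := hA; haveI := hB
  constructor
  intro E X φ e he
  obtain ⟨ℓ₁, hℓ₁⟩ := Projective.factors ((ModuleCat.ofHom (LinearMap.inl R A B) : A ⟶ ModuleCat.of R (↥A × ↥B)) ≫ φ) e
  obtain ⟨ℓ₂, hℓ₂⟩ := Projective.factors ((ModuleCat.ofHom (LinearMap.inr R A B) : B ⟶ ModuleCat.of R (↥A × ↥B)) ≫ φ) e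
  refine ⟨ModuleCat.ofHom (LinearMap.coprod ℓ₁.hom ℓ₂.hom), ?_⟩
  apply ModuleCat.hom_ext; apply LinearMap.ext
  intro z
  have h1 : e (ℓ₁ z.1) = φ (z.1, 0) := congrArg (fun (t : A ⟶ X) => t z.1) hℓ₁
  have h2 : e (ℓ₂ z.2) = φ (0, z.2) := congrArg (fun (t : B ⟶ X) => t z.2) hℓ₂
  show e (ℓ₁ z.1 + ℓ₂ z.2) = φ z
  rw [map_add, h1, h2, ← map_add]
  congr 1
  refine Prod.ext ?_ ?_
  · show z.1 + 0 = z.1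
    simp
  · show 0 + z.2 = z.2
    simp

/-- relating the extension property of a presentation of `A` to a presentation of an
"extension" `Wm` of `B` by `A`, split over `B`. -/
lemma extProp_prod_pres {A Wm B Q : ModuleCat.{u} R} (j : A ⟶ Wm) (π₂ : Wm ⟶ B) (σ : B ⟶ Wm)
    (hσ : ∀ b, π₂ (σ b) = b) (hjinj : Function.Injective j)
    (hjker : ∀ w, π₂ w = 0 → ∃ a, j a = w) (hπ₂j : ∀ a, π₂ (j a) = 0)
    (g : Q ⟶ A) (hg : Function.Surjective g) (M : ModuleCat.{u} R) :
    Function.Surjective (ModuleCat.ofHom (LinearMap.coprod (j.hom ∘ₗ g.hom) σ.hom) :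
        ModuleCat.of R (↥Q × ↥B) ⟶ Wm) ∧
    (ExtProp g M ↔
      ExtProp (ModuleCat.ofHom (LinearMap.coprod (j.hom ∘ₗ g.hom)
        σ.hom) : ModuleCat.of R (↥Q × ↥B) ⟶ Wm) M) := by
  set G : ModuleCat.of R (↥Q × ↥B) ⟶ Wm :=
    ModuleCat.ofHom (LinearMap.coprod (j.hom ∘ₗ g.hom) σ.hom)
      with hG
  have hGapp : ∀ z : ↥Q × ↥B, G z = j (g z.1) + σ z.2 := fun z => rfl
  have hkerG : ∀ z : ↥Q × ↥B, z ∈ LinearMap.ker G.hom ↔ (z.1 ∈ LinearMap.ker g.hom ∧ z.2 = 0) := by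
    intro z
    simp only [LinearMap.mem_ker]
    constructor
    · intro hz
      have hz : j (g z.1) + σ z.2 = 0 := (hGapp z) ▸ hz
      have h2 : π₂ (j (g z.1) + σ z.2) = 0 := by rw [hz, map_zero]
      rw [map_add, hπ₂j, hσ, zero_add] at h2
      rw [h2, map_zero, add_zero] at hz
      have : g z.1 = 0 := hjinj (by rw [hz, map_zero])
      exact ⟨this, h2⟩
    · rintro ⟨h1, h2⟩
      show G z = 0
      rw [hGapp, h1, h2, map_zero, map_zero, add_zero]
  constructor
  · -- surjectivity of G
    intro w
    obtain ⟨a, ha⟩ := hjker (w - σ (π₂ w)) (by rw [map_sub, hσ, sub_self])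
    obtain ⟨z, hz⟩ := hg a
    refine ⟨(z, π₂ w), ?_⟩
    show G (z, π₂ w) = w
    rw [hGapp]
    dsimp only
    rw [hz, ha]
    abel
  · constructor
    · -- ExtProp g → ExtProp G
      intro h φ
      have hmem : ∀ x : LinearMap.ker g.hom, ((x.1, 0) : ↥Q × ↥B) ∈ LinearMap.ker G.hom := by
        intro x; rw [hkerG]; exact ⟨x.2, rfl⟩
      let ι : (LinearMap.ker g.hom) →ₗ[R] (LinearMap.ker G.hom) :=
        LinearMap.codRestrict _ ((LinearMap.inl R ↥Q ↥B) ∘ₗ (LinearMap.ker g.hom).subtype)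
          (fun x => hmem x)
      obtain ⟨Φ₀, hΦ₀⟩ := h (φ ∘ₗ ι)
      refine ⟨ModuleCat.ofHom (Φ₀.hom ∘ₗ (LinearMap.fst R ↥Q ↥B)), fun x => ?_⟩
      have hx1 : x.1.1 ∈ LinearMap.ker g.hom := ((hkerG x.1).1 x.2).1
      have hx2 : x.1.2 = 0 := ((hkerG x.1).1 x.2).2
      show Φ₀ x.1.1 = φ x
      rw [hΦ₀ ⟨x.1.1, hx1⟩]
      show φ (ι ⟨x.1.1, hx1⟩) = φ x
      congr 1
      refine Subtype.ext ?_
      show ((x.1.1, 0) : ↥Q × ↥B) = x.1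
      exact Prod.ext rfl hx2.symm
    · -- ExtProp G → ExtProp g
      intro h φ₀
      have hmem : ∀ w : LinearMap.ker G.hom, w.1.1 ∈ LinearMap.ker g.hom :=
        fun w => ((hkerG w.1).1 w.2).1
      let ρ : (LinearMap.ker G.hom) →ₗ[R] (LinearMap.ker g.hom) :=
        LinearMap.codRestrict _ ((LinearMap.fst R ↥Q ↥B) ∘ₗ (LinearMap.ker G.hom).subtype)
          (fun w => hmem w)
      obtain ⟨Φ, hΦ⟩ := h (φ₀ ∘ₗ ρ)
      refine ⟨ModuleCat.ofHom (Φ.hom ∘ₗ (LinearMap.inl R ↥Q ↥B)), fun x => ?_⟩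
      have hmem' : ((x.1, 0) : ↥Q × ↥B) ∈ LinearMap.ker G.hom := by
        rw [hkerG]; exact ⟨x.2, rfl⟩
      show Φ (x.1, 0) = φ₀ x
      rw [hΦ ⟨(x.1, 0), hmem'⟩]
      show φ₀ (ρ ⟨(x.1, 0), hmem'⟩) = φ₀ x
      congr 1

/-- Schanuel-style transfer: extension properties of presentations of the syzygies w.r.t.
two different projective presentations of `T` agree. -/
lemma extProp_ker_transfer {T P P' : ModuleCat.{u} R} (f : P ⟶ T) (f' : P' ⟶ T)
    (hP : Projective P) (hP' : Projective P')
    (hf : Function.Surjective f) (hf' : Function.Surjective f')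
    {Q Q' : ModuleCat.{u} R}
    (g : Q ⟶ ModuleCat.of R (LinearMap.ker f.hom)) (g' : Q' ⟶ ModuleCat.of R (LinearMap.ker f'.hom))
    (hQ : Projective Q) (hQ' : Projective Q')
    (hg : Function.Surjective g) (hg' : Function.Surjective g') (M : ModuleCat.{u} R) :
    ExtProp g M ↔ ExtProp g' M := by
  classical
  set h0 : (↥P × ↥P') →ₗ[R] ↥T :=
    (f.hom ∘ₗ (LinearMap.fst R ↥P ↥P')) -
      (f'.hom ∘ₗ (LinearMap.snd R ↥P ↥P')) with hh0
  have h0app : ∀ z : ↥P × ↥P', h0 z = f z.1 - f' z.2 := fun z => rfl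
  set W := LinearMap.ker h0 with hW
  set Wm := ModuleCat.of R (↥W) with hWm
  -- the two coordinate projections
  set π₂ : Wm ⟶ P' := ModuleCat.ofHom ((LinearMap.snd R ↥P ↥P') ∘ₗ W.subtype) with hπ₂
  set π₁ : Wm ⟶ P := ModuleCat.ofHom ((LinearMap.fst R ↥P ↥P') ∘ₗ W.subtype) with hπ₁
  have hπ₂surj : Function.Surjective π₂ := by
    intro b
    obtain ⟨a, ha⟩ := hf (f' b)
    refine ⟨⟨(a, b), ?_⟩, rfl⟩
    show h0 (a, b) = 0
    rw [h0app]
    dsimp only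
    rw [ha, sub_self]
  have hπ₁surj : Function.Surjective π₁ := by
    intro a
    obtain ⟨b, hb⟩ := hf' (f a)
    refine ⟨⟨(a, b), ?_⟩, rfl⟩
    show h0 (a, b) = 0
    rw [h0app]
    dsimp only
    rw [hb, sub_self]
  haveI : Epi π₂ := (ModuleCat.epi_iff_surjective _).2 hπ₂surj
  haveI : Epi π₁ := (ModuleCat.epi_iff_surjective _).2 hπ₁surj
  haveI := hP; haveI := hP'
  obtain ⟨σ₂, hσ₂⟩ := Projective.factors (𝟙 P') π₂
  obtain ⟨σ₁, hσ₁⟩ := Projective.factors (𝟙 P) π₁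
  have hσ₂' : ∀ b, π₂ (σ₂ b) = b := fun b => congrArg (fun (t : P' ⟶ P') => t b) hσ₂
  have hσ₁' : ∀ a, π₁ (σ₁ a) = a := fun a => congrArg (fun (t : P ⟶ P) => t a) hσ₁
  -- the embeddings of the kernels
  set j : ModuleCat.of R (LinearMap.ker f.hom) ⟶ Wm :=
    ModuleCat.ofHom <| LinearMap.codRestrict W ((LinearMap.inl R ↥P ↥P') ∘ₗ (LinearMap.ker f.hom).subtype)
      (fun x => by
        show h0 (x.1, (0 : ↥P')) = 0
        rw [h0app]
        dsimp only
        rw [map_zero, sub_zero]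
        exact x.2) with hj
  set j' : ModuleCat.of R (LinearMap.ker f'.hom) ⟶ Wm :=
    ModuleCat.ofHom <| LinearMap.codRestrict W ((LinearMap.inr R ↥P ↥P') ∘ₗ (LinearMap.ker f'.hom).subtype)
      (fun x => by
        show h0 ((0 : ↥P), x.1) = 0
        rw [h0app]
        dsimp only
        rw [map_zero, zero_sub, neg_eq_zero]
        exact x.2) with hj'
  have hjinj : Function.Injective j := by
    intro x y hxy
    apply Subtype.ext
    exact congrArg (fun w : ↥W => w.1.1) hxy
  have hj'inj : Function.Injective j' := by
    intro x y hxy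
    apply Subtype.ext
    exact congrArg (fun w : ↥W => w.1.2) hxy
  have hjker : ∀ w : Wm, π₂ w = 0 → ∃ a, j a = w := by
    intro w hw
    have hw2 : (w.1).2 = 0 := hw
    have hmem : (w.1).1 ∈ LinearMap.ker f.hom := by
      have hthis : h0 w.1 = 0 := w.2
      rw [h0app, hw2, map_zero, sub_zero] at hthis
      exact hthis
    refine ⟨⟨(w.1).1, hmem⟩, ?_⟩
    apply Subtype.ext
    show ((w.1).1, (0 : ↥P')) = w.1
    exact Prod.ext rfl hw2.symm
  have hj'ker : ∀ w : Wm, π₁ w = 0 → ∃ a, j' a = w := by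
    intro w hw
    have hw1 : (w.1).1 = 0 := hw
    have hmem : (w.1).2 ∈ LinearMap.ker f'.hom := by
      have hthis : h0 w.1 = 0 := w.2
      rw [h0app, hw1, map_zero, zero_sub, neg_eq_zero] at hthis
      exact hthis
    refine ⟨⟨(w.1).2, hmem⟩, ?_⟩
    apply Subtype.ext
    show ((0 : ↥P), (w.1).2) = w.1
    exact Prod.ext hw1.symm rfl
  have hπ₂j : ∀ a, π₂ (j a) = 0 := fun a => rfl
  have hπ₁j' : ∀ a, π₁ (j' a) = 0 := fun a => rfl
  obtain ⟨hsurj₁, hiff₁⟩ := extProp_prod_pres j π₂ σ₂ hσ₂' hjinj hjker hπ₂j g hg M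
  obtain ⟨hsurj₂, hiff₂⟩ := extProp_prod_pres j' π₁ σ₁ hσ₁' hj'inj hj'ker hπ₁j' g' hg' M
  rw [hiff₁, hiff₂]
  constructor
  · exact fun h => extProp_transfer _ _ (projective_prod hQ hP') (projective_prod hQ' hP)
      hsurj₁ hsurj₂ h
  · exact fun h => extProp_transfer _ _ (projective_prod hQ' hP) (projective_prod hQ hP')
      hsurj₂ hsurj₁ h

lemma extVanish_one_iff {T P M : ModuleCat.{u} R} (f : P ⟶ T)
    (hP : Projective P) (hf : Function.Surjective f) :
    ExtVanish 1 T M ↔ ExtProp f M := by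
  let Pr : ProjectiveResolution T := ProjectiveResolution.of T
  have hπsurj : Function.Surjective (Pr.π.f 0 : Pr.complex.X 0 ⟶ T) := by
    rw [← ModuleCat.epi_iff_surjective]
    infer_instance
  have hexact0 : LinearMap.range (Pr.complex.d 1 0).hom =
      LinearMap.ker (Pr.π.f 0 : Pr.complex.X 0 ⟶ T).hom := by
    have := Pr.exact₀
    rwa [ShortComplex.moduleCat_exact_iff_range_eq_ker] at this
  have hker : LinearMap.ker (Pr.complex.d 1 0).hom = LinearMap.range (Pr.complex.d 2 1).hom := by
    have := Pr.exact_succ 0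
    rw [ShortComplex.moduleCat_exact_iff_range_eq_ker] at this
    exact this.symm
  show Subsingleton _ ↔ _
  rw [extVanish_iff_exactAt T M Pr 1, exactAt_iff_crit T M Pr 0,
    crit_iff_extension (Pr.complex.d 2 1) (Pr.complex.d 1 0) hker, hexact0]
  constructor
  · exact fun h => extProp_transfer (Pr.π.f 0) f (Pr.projective 0) hP hπsurj hf h
  · exact fun h => extProp_transfer f (Pr.π.f 0) hP (Pr.projective 0) hf hπsurj h

lemma extVanish_two_iff {T P M : ModuleCat.{u} R} (f : P ⟶ T)
    (hP : Projective P) (hf : Function.Surjective f)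
    {Q : ModuleCat.{u} R} (g : Q ⟶ ModuleCat.of R (LinearMap.ker f.hom))
    (hQ : Projective Q) (hg : Function.Surjective g) :
    ExtVanish 2 T M ↔ ExtProp g M := by
  let Pr : ProjectiveResolution T := ProjectiveResolution.of T
  have hπsurj : Function.Surjective (Pr.π.f 0 : Pr.complex.X 0 ⟶ T) := by
    rw [← ModuleCat.epi_iff_surjective]
    infer_instance
  have hexact0 : LinearMap.range (Pr.complex.d 1 0).hom =
      LinearMap.ker (Pr.π.f 0 : Pr.complex.X 0 ⟶ T).hom := by
    have := Pr.exact₀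
    rwa [ShortComplex.moduleCat_exact_iff_range_eq_ker] at this
  have hexact1 : LinearMap.range (Pr.complex.d 2 1).hom = LinearMap.ker (Pr.complex.d 1 0).hom := by
    have := Pr.exact_succ 0
    rwa [ShortComplex.moduleCat_exact_iff_range_eq_ker] at this
  have hker2 : LinearMap.ker (Pr.complex.d 2 1).hom = LinearMap.range (Pr.complex.d 3 2).hom := by
    have := Pr.exact_succ 1
    rw [ShortComplex.moduleCat_exact_iff_range_eq_ker] at this
    exact this.symm
  -- e1 : X1 ⟶ ker (π.f 0), corestriction of d 1 0
  set e1 : Pr.complex.X 1 ⟶ ModuleCat.of R (LinearMap.ker (Pr.π.f 0 : Pr.complex.X 0 ⟶ T).hom) :=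
    ModuleCat.ofHom <| LinearMap.codRestrict _ (Pr.complex.d 1 0).hom
      (fun x => by
        rw [← hexact0]
        exact LinearMap.mem_range_self _ x) with he1
  have he1surj : Function.Surjective e1 := by
    intro x
    have hx : x.1 ∈ LinearMap.range (Pr.complex.d 1 0).hom := by
      rw [hexact0]
      exact x.2
    obtain ⟨y, hy⟩ := hx
    exact ⟨y, Subtype.ext hy⟩
  have hkere1 : LinearMap.range (Pr.complex.d 2 1).hom = LinearMap.ker e1.hom := by
    rw [hexact1]
    ext x
    constructor
    · intro hx
      exact Subtype.ext hx
    · intro hx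
      exact congrArg Subtype.val (hx : e1 x = 0)
  show Subsingleton _ ↔ _
  rw [extVanish_iff_exactAt T M Pr 2, exactAt_iff_crit T M Pr 1,
    crit_iff_extension (Pr.complex.d 3 2) (Pr.complex.d 2 1) hker2, hkere1]
  exact extProp_ker_transfer (Pr.π.f 0) f (Pr.projective 0) hP hπsurj hf
    e1 g (Pr.projective 1) hQ he1surj hg M

lemma memGen_self (T : ModuleCat.{u} R) : MemGen T T := by
  refine ⟨PUnit, ModuleCat.ofHom (Finsupp.lapply PUnit.unit), fun t => ?_⟩
  refine ⟨Finsupp.single PUnit.unit t, ?_⟩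
  show (Finsupp.single PUnit.unit t) PUnit.unit = t
  exact Finsupp.single_eq_same

lemma memGen_quotient {T X Y : ModuleCat.{u} R} (h : MemGen T X) (e : X ⟶ Y)
    (he : Function.Surjective e) : MemGen T Y := by
  obtain ⟨J, f, hf⟩ := h
  exact ⟨J, f ≫ e, he.comp hf⟩

/-- smallness of the kernel of a projective cover -/
lemma small_of_cover {P A : ModuleCat.{u} R} (f : P ⟶ A)
    (hmin : ∀ (N : ModuleCat.{u} R) (g : N ⟶ P), Function.Surjective (g ≫ f) →
      Function.Surjective g)
    (hf : Function.Surjective f) (U : Submodule R P) (hU : U ⊔ LinearMap.ker f.hom = ⊤) :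
    U = ⊤ := by
  have hsurj : Function.Surjective ((ModuleCat.ofHom U.subtype : ModuleCat.of R U ⟶ P) ≫ f) := by
    intro a
    obtain ⟨x, hx⟩ := hf a
    have hxmem : x ∈ U ⊔ LinearMap.ker f.hom := hU ▸ Submodule.mem_top
    obtain ⟨u, hu, k, hk, huk⟩ := Submodule.mem_sup.1 hxmem
    refine ⟨⟨u, hu⟩, ?_⟩
    show f u = a
    have : f x = f u + f k := by rw [← huk, map_add]
    rw [LinearMap.mem_ker.1 hk, add_zero] at this
    rw [← this, hx]
  have := hmin _ _ hsurj
  rw [Submodule.eq_top_iff']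
  intro x
  obtain ⟨⟨u, hu⟩, hux⟩ := this x
  exact hux ▸ hu

lemma cover_vanish {P A W : ModuleCat.{u} R} (f : P ⟶ A)
    (hmin : ∀ (N : ModuleCat.{u} R) (g : N ⟶ P), Function.Surjective (g ≫ f) →
      Function.Surjective g)
    (hf : Function.Surjective f) (η : P ⟶ W)
    (h : ∀ x : P, ∃ k ∈ LinearMap.ker f.hom, η k = η x) : η = 0 := by
  have hU : LinearMap.ker η.hom ⊔ LinearMap.ker f.hom = ⊤ := by
    rw [Submodule.eq_top_iff']
    intro x
    obtain ⟨k, hk, hηk⟩ := h x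
    have hxk : x - k ∈ LinearMap.ker η.hom := by
      rw [LinearMap.mem_ker, map_sub, hηk, sub_self]
    have : x = (x - k) + k := by abel
    rw [this]
    exact Submodule.add_mem_sup hxk hk
  have := small_of_cover f hmin hf _ hU
  exact ModuleCat.hom_ext (LinearMap.ker_eq_top.1 this)

lemma nontrivial_of_surjective {X Y : ModuleCat.{u} R} (e : X ⟶ Y) (he : Function.Surjective e)
    (h : Nontrivial Y) : Nontrivial X := by
  obtain ⟨a, b, hab⟩ := h
  obtain ⟨x, hx⟩ := he a
  obtain ⟨y, hy⟩ := he b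
  exact ⟨x, y, fun hxy => hab (by rw [← hx, ← hy, hxy])⟩

end Aux

/-- over a perfect ring, a sincere module is pretilting iff
`Gen T ⊆ Ker Ext^{1≤i≤2}(T,-)`. -/
theorem stmt_12 {R : Type u} [Ring R] (hR : IsPerfect R)
    (T : ModuleCat.{u} R) (hsin : Sincere T) :
    IsPretilting T ↔
      ∀ X : ModuleCat.{u} R, MemGen T X → ExtVanish 1 T X ∧ ExtVanish 2 T X := by
  constructor
  · rintro ⟨hpd, hJ⟩ X hX
    obtain ⟨J, s, hs⟩ := hX
    simp only [PdLE] at hpd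
    obtain ⟨P, f, hP, hf, hker⟩ := hpd
    have hkerproj : Projective (ModuleCat.of R (LinearMap.ker f.hom)) := hker
    haveI := hkerproj
    haveI : Epi s := (ModuleCat.epi_iff_surjective _).2 hs
    constructor
    · rw [extVanish_one_iff f hP hf]
      intro φ
      have hE : ExtProp f (copies T J) := (extVanish_one_iff f hP hf).1 (hJ J)
      set ψ : ModuleCat.of R (LinearMap.ker f.hom) ⟶ copies T J :=
        Projective.factorThru (ModuleCat.ofHom φ) s with hψdef
      have hψ : ψ ≫ s = ModuleCat.ofHom φ := Projective.factorThru_comp _ _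
      obtain ⟨Ψ, hΨ⟩ := hE ψ.hom
      refine ⟨Ψ ≫ s, fun x => ?_⟩
      show s (Ψ x.1) = φ x
      rw [hΨ x]
      exact congrArg (fun (t : ModuleCat.of R (LinearMap.ker f.hom) ⟶ X) => t x) hψ
    · rw [extVanish_two_iff f hP hf (𝟙 (ModuleCat.of R (LinearMap.ker f.hom))) hkerproj
        Function.surjective_id]
      intro φ
      refine ⟨0, fun x => ?_⟩
      have hx0 : x.1 = 0 := x.2
      have hx : x = 0 := Subtype.ext hx0
      rw [hx, map_zero]
      show (0 : _ →ₗ[R] _) (0 : ModuleCat.of R (LinearMap.ker f.hom)).1 = 0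
      simp
  · intro H
    constructor
    · -- PdLE 1 T
      obtain ⟨P₀, p, hP₀, hp, hminp⟩ := hR.1 T
      obtain ⟨Q, q, hQ, hq, hminq⟩ := hR.1 (ModuleCat.of R (LinearMap.ker p.hom))
      suffices hproj : Projective (ModuleCat.of R (LinearMap.ker p.hom)) by
        show ∃ (P : ModuleCat.{u} R) (f : P ⟶ T), Projective P ∧ Function.Surjective f ∧
          PdLE 0 (ModuleCat.of R (LinearMap.ker f.hom))
        exact ⟨P₀, p, hP₀, hp, hproj⟩
      have hLsub : Subsingleton (LinearMap.ker q.hom) := by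
        by_contra hLtriv
        haveI : Nontrivial (LinearMap.ker q.hom) := not_subsingleton_iff_nontrivial.1 hLtriv
        obtain ⟨PL, c, hPL, hc, hminc⟩ := hR.1 (ModuleCat.of R (LinearMap.ker q.hom))
        haveI hPLnt : Nontrivial PL :=
          nontrivial_of_surjective c hc (inferInstanceAs (Nontrivial (LinearMap.ker q.hom)))
        obtain ⟨g, hg0⟩ := hsin PL hPL hPLnt
        set U : Submodule R T := Submodule.map g.hom (LinearMap.ker c.hom) with hU
        set V : Submodule R T := LinearMap.range g.hom with hV
        have hUV : U ≤ V := by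
          rintro _ ⟨y, -, rfl⟩
          exact ⟨y, rfl⟩
        set X : ModuleCat.{u} R := ModuleCat.of R (↥T ⧸ U) with hX
        set X' : ModuleCat.{u} R := ModuleCat.of R (↥T ⧸ V) with hX'
        set πU : T ⟶ X := ModuleCat.ofHom U.mkQ with hπU
        set πV : T ⟶ X' := ModuleCat.ofHom V.mkQ with hπV
        set w : X ⟶ X' := ModuleCat.ofHom (Submodule.mapQ U V LinearMap.id hUV) with hw
        have hwπ : ∀ t : T, w (πU t) = πV t := fun t => by
          show (Submodule.mapQ U V LinearMap.id hUV) (U.mkQ t) = V.mkQ t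
          rw [Submodule.mkQ_apply, Submodule.mapQ_apply]
          rfl
        have hπUsurj : Function.Surjective πU := Submodule.mkQ_surjective U
        have hπVsurj : Function.Surjective πV := Submodule.mkQ_surjective V
        -- the map lam : ker q → X
        obtain ⟨lam, hlam⟩ := factor_thru_surjective c (g ≫ πU) hc (by
          intro z hz
          show πU (g z) = 0
          have : g z ∈ U := ⟨z, hz, rfl⟩
          show Submodule.Quotient.mk (g z) = 0
          rw [Submodule.Quotient.mk_eq_zero]
          exact this)
        have hlam' : ∀ z : PL, lam (c z) = πU (g z) := fun z => hlam z
        -- lam ≠ 0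
        have hlamne : lam ≠ 0 := by
          intro h0
          apply hg0
          apply cover_vanish c hminc hc g
          intro x
          have h1 : πU (g x) = 0 := by
            rw [← hlam' x, h0]
            show (0 : _ →ₗ[R] _) (c x) = 0
            simp
          have h2 : g x ∈ U := by
            rwa [show πU (g x) = Submodule.Quotient.mk (g x) from rfl,
              Submodule.Quotient.mk_eq_zero] at h1
          obtain ⟨k, hk, hkeq⟩ := h2
          exact ⟨k, hk, hkeq⟩
        -- the range of lam
        have hlamrange : ∀ x : LinearMap.ker q.hom, lam x ∈ Submodule.map (U.mkQ) V := by
          intro x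
          obtain ⟨z, hz⟩ := hc x
          rw [← hz, hlam' z]
          exact ⟨g z, ⟨z, rfl⟩, rfl⟩
        have hSrange : ∀ t : X, t ∈ Submodule.map (U.mkQ) V → ∃ x : LinearMap.ker q.hom, lam x = t := by
          rintro t ⟨v, hv, rfl⟩
          obtain ⟨z, hz⟩ := hv
          refine ⟨c z, ?_⟩
          rw [hlam' z, hz]
          rfl
        -- membership in Gen T
        have hXgen : MemGen T X := memGen_quotient (memGen_self T) πU hπUsurj
        have hX'gen : MemGen T X' := memGen_quotient (memGen_self T) πV hπVsurj
        -- extension of lam to Q using Ext^2(T,X) = 0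
        have hEP2 : ExtProp q X := (extVanish_two_iff p hP₀ hp q hQ hq).1 (H X hXgen).2
        obtain ⟨Φ, hΦ⟩ := hEP2 lam.hom
        -- push down to X' and factor through ker p
        set θ : Q ⟶ X' := Φ ≫ w with hθ
        have hkerθ : LinearMap.ker q.hom ≤ LinearMap.ker θ.hom := by
          intro z hz
          show w (Φ z) = 0
          have h1 : Φ z = lam ⟨z, hz⟩ := hΦ ⟨z, hz⟩
          rw [h1]
          obtain ⟨v, hv, hveq⟩ := hlamrange ⟨z, hz⟩
          rw [← hveq]
          show w (Submodule.Quotient.mk v) = 0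
          have h2 : w (Submodule.Quotient.mk v) = Submodule.Quotient.mk v := by
            show (Submodule.mapQ U V LinearMap.id hUV) (Submodule.Quotient.mk v) = _
            rw [Submodule.mapQ_apply]
            rfl
          rw [h2, Submodule.Quotient.mk_eq_zero]
          exact hv
        obtain ⟨δ, hδ⟩ := factor_thru_surjective q θ hq hkerθ
        -- extension of δ to P₀ using Ext^1(T,X') = 0
        have hEP1 : ExtProp p X' := (extVanish_one_iff p hP₀ hp).1 (H X' hX'gen).1
        obtain ⟨Δ, hΔ⟩ := hEP1 δ.hom
        -- lift Δ along πV
        haveI : Epi πV := (ModuleCat.epi_iff_surjective _).2 hπVsurj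
        haveI := hP₀
        obtain ⟨Δt, hΔt⟩ := Projective.factors Δ πV
        have hΔt' : ∀ y : P₀, πV (Δt y) = Δ y :=
          fun y => congrArg (fun (t : P₀ ⟶ X') => t y) hΔt
        -- the difference map η
        set sub : ModuleCat.of R (LinearMap.ker p.hom) ⟶ P₀ :=
          ModuleCat.ofHom (LinearMap.ker p.hom).subtype with hsub
        set η : Q ⟶ X := Φ - (q ≫ sub ≫ Δt ≫ πU) with hη
        have hηapp : ∀ z : Q, η z = Φ z - πU (Δt ((q z).1)) := fun z => rfl
        have hηL : ∀ x : LinearMap.ker q.hom, η x.1 = lam x := by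
          intro x
          rw [hηapp]
          have h1 : q x.1 = 0 := x.2
          rw [h1]
          show Φ x.1 - πU (Δt ((0 : LinearMap.ker p.hom) : P₀)) = lam x
          rw [ZeroMemClass.coe_zero, map_zero, map_zero, sub_zero]
          exact hΦ x
        have hηmem : ∀ z : Q, η z ∈ Submodule.map (U.mkQ) V := by
          intro z
          have hw0 : w (η z) = 0 := by
            rw [hηapp]
            rw [map_sub]
            have h1 : w (Φ z) = θ z := rfl
            have h2 : w (πU (Δt ((q z).1))) = πV (Δt ((q z).1)) := hwπ _
            rw [h1, h2, hΔt' _, hΔ (q z), ← hδ z]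
            exact sub_self _
          obtain ⟨x, hx⟩ := hπUsurj (η z)
          have : πU x = η z := hx
          rw [← this] at hw0 ⊢
          have h3 : w (πU x) = Submodule.Quotient.mk x := by
            rw [hwπ]
            rfl
          rw [h3, Submodule.Quotient.mk_eq_zero] at hw0
          exact ⟨x, hw0, rfl⟩
        have hη0 : η = 0 := by
          apply cover_vanish q hminq hq η
          intro z
          obtain ⟨x, hx⟩ := hSrange (η z) (hηmem z)
          exact ⟨x.1, x.2, by rw [hηL x, hx]⟩
        apply hlamne
        apply ModuleCat.hom_ext; apply LinearMap.ext
        intro x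
        rw [← hηL x, hη0]
        rfl
      -- ker q trivial : q is an isomorphism, so ker p is projective
      have hqinj : Function.Injective q := by
        intro a b hab
        have hmem : a - b ∈ LinearMap.ker q.hom := by
          rw [LinearMap.mem_ker, map_sub, hab, sub_self]
        have h2 : (⟨a - b, hmem⟩ : LinearMap.ker q.hom) = ⟨0, (LinearMap.ker q.hom).zero_mem⟩ :=
          Subsingleton.elim _ _
        have h3 : a - b = 0 := congrArg Subtype.val h2
        exact sub_eq_zero.1 h3
      set eqv := LinearEquiv.ofBijective q.hom
        ⟨hqinj, hq⟩ with heqv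
      haveI := hQ
      refine ⟨fun φ e he => ?_⟩
      obtain ⟨ℓ, hℓ⟩ := Projective.factors (q ≫ φ) e
      refine ⟨ModuleCat.ofHom (ℓ.hom.comp eqv.symm.toLinearMap), ?_⟩
      apply ModuleCat.hom_ext; apply LinearMap.ext
      intro x
      show e (ℓ (eqv.symm x)) = φ x
      have h1 : e (ℓ (eqv.symm x)) = φ (q (eqv.symm x)) :=
        congrArg (fun (t : Q ⟶ _) => t (eqv.symm x)) hℓ
      rw [h1]
      congr 1
      exact eqv.apply_symm_apply x
    · intro J
      refine (H (copies T J) ⟨J, 𝟙 _, fun x => ⟨x, rfl⟩⟩).1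
end

section
/- Let R be a perfect ring. An R-module T is tilting if and only if T is a sincere silting module satisfying Ext^2_R(T,X) = 0 for all X ∈ Gen T. -/
open CategoryTheory CategoryTheory.Limits

universe u

/-! ### Auxiliary machinery -/

universe v w
noncomputable section
namespace StmtAux
open CategoryTheory CategoryTheory.Limits

variable {R : Type u} [Ring R]

section Resolution

variable (P₀ P₁ : ModuleCat.{u} R) (σ : P₁ ⟶ P₀)

/-- iterated syzygy data -/
def seq : ℕ → Σ' (A B : ModuleCat.{u} R), A ⟶ B
  | 0 => ⟨P₁, P₀, σ⟩
  | n + 1 => ⟨Projective.syzygies (seq n).2.2, (seq n).1, Projective.d (seq n).2.2⟩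

/-- objects of the resolution -/
def rX (n : ℕ) : ModuleCat.{u} R := (seq P₀ P₁ σ n).2.1

/-- differentials of the resolution -/
def rd (n : ℕ) : rX P₀ P₁ σ (n + 1) ⟶ rX P₀ P₁ σ n := (seq P₀ P₁ σ n).2.2

/-- the resolution complex extending a given projective presentation -/
def resComplex : ChainComplex (ModuleCat.{u} R) ℕ :=
  ChainComplex.of (rX P₀ P₁ σ) (rd P₀ P₁ σ) (by
    intro n
    show Projective.d (rd P₀ P₁ σ n) ≫ rd P₀ P₁ σ n = 0
    exact (Category.assoc _ _ _).trans (by rw [kernel.condition]; exact comp_zero))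

lemma resComplex_d (n : ℕ) : (resComplex P₀ P₁ σ).d (n + 1) n = rd P₀ P₁ σ n :=
  ChainComplex.of_d _ _ n

variable [Projective P₀] [Projective P₁]

instance resComplex_projective (n : ℕ) : Projective ((resComplex P₀ P₁ σ).X n) := by
  match n with
  | 0 => exact inferInstanceAs (Projective P₀)
  | 1 => exact inferInstanceAs (Projective P₁)
  | (n+2) => exact inferInstanceAs (Projective (Projective.over _))

omit [Projective P₀] [Projective P₁] in
lemma resComplex_exactAt_succ (n : ℕ) : (resComplex P₀ P₁ σ).ExactAt (n + 1) := by
  rw [HomologicalComplex.exactAt_iff' _ (n + 1 + 1) (n + 1) n (by simp) (by simp)]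
  dsimp [resComplex, HomologicalComplex.sc', HomologicalComplex.shortComplexFunctor']
  simp only [ChainComplex.of_d]
  show (ShortComplex.mk (Projective.d (rd P₀ P₁ σ n)) (rd P₀ P₁ σ n) _).Exact
  apply exact_d_f

variable {P₀ P₁ σ}
variable {T : ModuleCat.{u} R} (π : P₀ ⟶ T)

/-- The projective resolution of `T` extending the given projective presentation. -/
def res (hπ : Function.Surjective π) (hσπ : LinearMap.range σ.hom = LinearMap.ker π.hom) :
    ProjectiveResolution T where
  complex := resComplex P₀ P₁ σ
  π := (ChainComplex.toSingle₀Equiv _ _).symm ⟨π, by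
        show σ ≫ π = 0
        ext x
        show π (σ x) = 0
        have : σ x ∈ LinearMap.ker π.hom := hσπ ▸ LinearMap.mem_range_self σ.hom x
        exact this⟩
  quasiIso := ⟨fun n => by
    cases n with
    | zero =>
      rw [ChainComplex.quasiIsoAt₀_iff, ShortComplex.quasiIso_iff_of_zeros']
      · have hexact : (ShortComplex.mk σ π (by
          ext x
          show π (σ x) = 0
          have : σ x ∈ LinearMap.ker π.hom := hσπ ▸ LinearMap.mem_range_self σ.hom x
          exact this)).Exact := by
          rw [ShortComplex.moduleCat_exact_iff_range_eq_ker]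
          exact hσπ
        have hepi : Epi π := (ModuleCat.epi_iff_surjective π).mpr hπ
        refine (ShortComplex.exact_and_epi_g_iff_of_iso ?_).2 ⟨hexact, hepi⟩
        refine ShortComplex.isoMk (Iso.refl _) (Iso.refl _) (Iso.refl _) ?_ ?_
        · dsimp
          exact ((Category.id_comp _).trans (resComplex_d P₀ P₁ σ 0).symm).trans (Category.comp_id _).symm
        · refine (Category.id_comp π).trans (Eq.trans ?_ (Category.comp_id _).symm)
          exact (Category.comp_id π).symm
      all_goals rfl
    | succ n =>
      rw [quasiIsoAt_iff_exactAt']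
      · apply resComplex_exactAt_succ
      · apply ChainComplex.exactAt_succ_single_obj⟩

end Resolution


section Factor

variable {A B X : Type u} [AddCommGroup A] [AddCommGroup B] [AddCommGroup X]
  [Module R A] [Module R B] [Module R X]

/-- factor a linear map through a surjection killing its kernel -/
lemma exists_factor_of_surjective (c : A →ₗ[R] B) (hc : Function.Surjective c)
    (s : A →ₗ[R] X) (hs : ∀ a : A, c a = 0 → s a = 0) :
    ∃ t : B →ₗ[R] X, ∀ a : A, t (c a) = s a := by
  have key : ∀ a a' : A, c a = c a' → s a = s a' := by
    intro a a' h
    have : s (a - a') = 0 := hs _ (by rw [map_sub, h, sub_self])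
    rw [map_sub, sub_eq_zero] at this
    exact this
  set t₀ : B → X := fun b => s (Function.surjInv hc b) with ht₀
  have htc : ∀ a : A, t₀ (c a) = s a := fun a => key _ _ (Function.surjInv_eq hc (c a))
  refine ⟨{ toFun := t₀
            map_add' := ?_
            map_smul' := ?_ }, htc⟩
  · intro b b'
    obtain ⟨a, rfl⟩ := hc b
    obtain ⟨a', rfl⟩ := hc b'
    rw [← map_add c, htc, htc, htc, map_add]
  · intro r b
    obtain ⟨a, rfl⟩ := hc b
    simp only [RingHom.id_apply]
    rw [← map_smul, htc, htc, map_smul]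

end Factor

section Homology

/-- subsingleton of homology of a short complex of modules -/
lemma subsingleton_homology_iff {A : Type w} [Ring A] (S : ShortComplex (ModuleCat.{v} A)) :
    Subsingleton S.homology ↔ ∀ (x : S.X₂), S.g x = 0 → ∃ y : S.X₁, S.f y = x := by
  have e : S.homology ≅ S.moduleCatLeftHomologyData.H := S.moduleCatLeftHomologyData.homologyIso
  have : Subsingleton S.homology ↔ Subsingleton S.moduleCatLeftHomologyData.H :=
    Equiv.subsingleton_congr e.toLinearEquiv.toEquiv
  rw [this]
  show Subsingleton (_ ⧸ LinearMap.range S.moduleCatToCycles) ↔ _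
  rw [Submodule.Quotient.subsingleton_iff, Submodule.eq_top_iff']
  constructor
  · intro h x hx
    obtain ⟨y, hy⟩ := h ⟨x, hx⟩
    exact ⟨y, congrArg Subtype.val hy⟩
  · rintro h ⟨x, hx⟩
    obtain ⟨y, hy⟩ := h x hx
    exact ⟨y, Subtype.ext hy⟩

variable {T P₀ P₁ M : ModuleCat.{u} R} (σ : P₁ ⟶ P₀) (π : P₀ ⟶ T)
variable [Projective P₀] [Projective P₁]

lemma extVanish_iff_subsingleton_sc' (hπ : Function.Surjective π)
    (hσπ : LinearMap.range σ.hom = LinearMap.ker π.hom) (n i k : ℕ)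
    (hi : (ComplexShape.up ℕ).prev n = i) (hk : (ComplexShape.up ℕ).next n = k) :
    ExtVanish n T M ↔
      Subsingleton ((((resComplex P₀ P₁ σ).linearYonedaObj ℤ M).sc' i n k).homology) := by
  have e1 := ProjectiveResolution.isoExt (R := ℤ) (res π hπ hσπ) n M
  have e2 := HomologicalComplex.homologyIsoSc'
    ((resComplex P₀ P₁ σ).linearYonedaObj ℤ M) i n k hi hk
  exact Equiv.subsingleton_congr ((forget (ModuleCat ℤ)).mapIso (e1 ≪≫ e2)).toEquiv

lemma extVanish_one_iff (hπ : Function.Surjective π)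
    (hσπ : LinearMap.range σ.hom = LinearMap.ker π.hom) :
    ExtVanish 1 T M ↔
      ∀ g : P₁ ⟶ M, (∀ x : P₁, σ x = 0 → g x = 0) → ∃ h : P₀ ⟶ M, σ ≫ h = g := by
  rw [extVanish_iff_subsingleton_sc' σ π hπ hσπ 1 0 2
    ((ComplexShape.up ℕ).prev_eq' rfl) ((ComplexShape.up ℕ).next_eq' rfl),
    subsingleton_homology_iff]
  have hrange : LinearMap.range (Projective.d σ).hom = LinearMap.ker σ.hom :=
    (exact_d_f σ).moduleCat_range_eq_ker
  constructor
  · intro H g hg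
    obtain ⟨h0, hh⟩ := H g (by
      show (resComplex P₀ P₁ σ).d 2 1 ≫ g = 0
      rw [resComplex_d]
      ext y
      show g (Projective.d σ y) = 0
      refine hg _ ?_
      have hmem : Projective.d σ y ∈ LinearMap.range (Projective.d σ).hom :=
        LinearMap.mem_range_self (Projective.d σ).hom y
      rw [hrange] at hmem
      exact hmem)
    set h : P₀ ⟶ M := h0 with hdef
    refine ⟨h, ?_⟩
    have hh' : (resComplex P₀ P₁ σ).d 1 0 ≫ h = g := hh
    rwa [resComplex_d] at hh'
  · intro H x hx
    set x' : P₁ ⟶ M := x with hxdef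
    obtain ⟨h, hh⟩ := H x' (by
      intro y hy
      have hmem : y ∈ LinearMap.range (Projective.d σ).hom := by rw [hrange]; exact hy
      obtain ⟨z, rfl⟩ := hmem
      have hx' : (resComplex P₀ P₁ σ).d 2 1 ≫ x' = 0 := hx
      rw [resComplex_d] at hx'
      exact ConcreteCategory.congr_hom hx' z)
    refine ⟨h, ?_⟩
    show (resComplex P₀ P₁ σ).d 1 0 ≫ h = x'
    rwa [resComplex_d]

lemma extVanish_two_iff (hπ : Function.Surjective π)
    (hσπ : LinearMap.range σ.hom = LinearMap.ker π.hom) :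
    ExtVanish 2 T M ↔
      ∀ g : ModuleCat.of R ↥(LinearMap.ker σ.hom) ⟶ M, ∃ h : P₁ ⟶ M,
        ∀ x : ↥(LinearMap.ker σ.hom), h x.1 = g x := by
  rw [extVanish_iff_subsingleton_sc' σ π hπ hσπ 2 1 3
    ((ComplexShape.up ℕ).prev_eq' rfl) ((ComplexShape.up ℕ).next_eq' rfl),
    subsingleton_homology_iff]
  have hdc : Projective.d σ ≫ σ = 0 := by exact (Category.assoc _ _ _).trans (by rw [kernel.condition]; exact comp_zero)
  have hrange : LinearMap.range (Projective.d σ).hom = LinearMap.ker σ.hom :=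
    (exact_d_f σ).moduleCat_range_eq_ker
  have hdc2 : Projective.d (Projective.d σ) ≫ Projective.d σ = 0 := by
    exact (Category.assoc _ _ _).trans (by rw [kernel.condition]; exact comp_zero)
  have hrange2 : LinearMap.range (Projective.d (Projective.d σ)).hom =
      LinearMap.ker (Projective.d σ).hom :=
    (exact_d_f (Projective.d σ)).moduleCat_range_eq_ker
  set ρ : (rX P₀ P₁ σ 2) →ₗ[R] ↥(LinearMap.ker σ.hom) :=
    LinearMap.codRestrict (LinearMap.ker σ.hom) (Projective.d σ).hom
      (fun y => ConcreteCategory.congr_hom hdc y) with hρ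
  have hρ_surj : Function.Surjective ρ := by
    rintro ⟨z, hz⟩
    have hmem : z ∈ LinearMap.range (Projective.d σ).hom := by rw [hrange]; exact hz
    obtain ⟨y, hy⟩ := hmem
    exact ⟨y, Subtype.ext hy⟩
  have hρ_app : ∀ y, (ρ y : P₁) = Projective.d σ y := fun y => rfl
  constructor
  · intro H g
    obtain ⟨h0, hh⟩ := H (ModuleCat.ofHom (LinearMap.comp g.hom ρ)) (by
      show (resComplex P₀ P₁ σ).d 3 2 ≫ _ = 0
      rw [resComplex_d]
      ext y
      show g (ρ (Projective.d (Projective.d σ) y)) = 0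
      have hz : ρ (Projective.d (Projective.d σ) y) = 0 := by
        apply Subtype.ext
        show Projective.d σ (Projective.d (Projective.d σ) y) = 0
        exact ConcreteCategory.congr_hom hdc2 y
      rw [hz, map_zero])
    set h : P₁ ⟶ M := h0 with hdef
    have hh' : (resComplex P₀ P₁ σ).d 2 1 ≫ h =
        ModuleCat.ofHom (LinearMap.comp g.hom ρ) := hh
    rw [resComplex_d] at hh'
    refine ⟨h, ?_⟩
    intro x
    have hmem : (x : P₁) ∈ LinearMap.range (Projective.d σ).hom := by
      rw [hrange]; exact x.2
    obtain ⟨y, hy⟩ := hmem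
    have h1 : h (Projective.d σ y) = g (ρ y) := ConcreteCategory.congr_hom hh' y
    have h2 : ρ y = x := Subtype.ext hy
    rw [← hy, h1, h2]
  · intro H x hx
    set x' : rX P₀ P₁ σ 2 ⟶ M := x with hxdef
    have hx' : (resComplex P₀ P₁ σ).d 3 2 ≫ x' = 0 := hx
    rw [resComplex_d] at hx'
    obtain ⟨t, ht⟩ := exists_factor_of_surjective (R := R) ρ hρ_surj x'.hom (by
      intro a ha
      have hmem : a ∈ LinearMap.range (Projective.d (Projective.d σ)).hom := by
        rw [hrange2]
        show Projective.d σ a = 0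
        exact congrArg Subtype.val ha
      obtain ⟨z, rfl⟩ := hmem
      exact ConcreteCategory.congr_hom hx' z)
    obtain ⟨h, hh⟩ := H (ModuleCat.ofHom t)
    refine ⟨h, ?_⟩
    show (resComplex P₀ P₁ σ).d 2 1 ≫ h = x'
    rw [resComplex_d]
    ext y
    show h (Projective.d σ y) = x' y
    have h3 : h ((ρ y : P₁)) = t (ρ y) := hh (ρ y)
    exact h3.trans (ht y)

end Homology

section Gen

variable {T X Y : ModuleCat.{u} R}

lemma memGen_self (T : ModuleCat.{u} R) : MemGen T T := by
  refine ⟨PUnit, ModuleCat.ofHom (Finsupp.lsum ℕ (fun _ : PUnit => LinearMap.id (R := R) (M := T))), ?_⟩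
  intro x
  refine ⟨Finsupp.single PUnit.unit x, ?_⟩
  show (Finsupp.lsum ℕ (fun _ : PUnit => LinearMap.id (R := R) (M := T)))
    (Finsupp.single PUnit.unit x) = x
  simp

lemma memGen_of_surjective (hX : MemGen T X) (f : X ⟶ Y)
    (hf : Function.Surjective f) : MemGen T Y := by
  obtain ⟨J, g, hg⟩ := hX
  exact ⟨J, g ≫ f, show Function.Surjective (f ∘ g) from hf.comp hg⟩

lemma memGen_quotient (T : ModuleCat.{u} R) (W : Submodule R T) :
    MemGen T (ModuleCat.of R (T ⧸ W)) :=
  memGen_of_surjective (memGen_self T) (show T ⟶ ModuleCat.of R (T ⧸ W) from ModuleCat.ofHom W.mkQ)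
    (Submodule.mkQ_surjective W)

end Gen

section Forward

variable (T : ModuleCat.{u} R)

/-- degree-zero part of the standard presentation -/
def FP₀ : ModuleCat.{u} R := Projective.over T

/-- the canonical projective cover map -/
def Fπ : FP₀ T ⟶ T := Projective.π T

instance : Projective (FP₀ T) := inferInstanceAs (Projective (Projective.over T))

lemma Fπ_surj : Function.Surjective (Fπ T) :=
  (ModuleCat.epi_iff_surjective (Fπ T)).mp (inferInstanceAs (Epi (Projective.π T)))

/-- the kernel of the canonical cover -/
def FK : Submodule R (FP₀ T) := LinearMap.ker (Fπ T).hom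

/-- the kernel as a module -/
def FKM : ModuleCat.{u} R := ModuleCat.of R ↥(FK T)

/-- projective cover of the kernel -/
def FP₁ : ModuleCat.{u} R := Projective.over (FKM T)

instance : Projective (FP₁ T) := inferInstanceAs (Projective (Projective.over (FKM T)))

/-- cover map onto the kernel -/
def Fc : FP₁ T ⟶ FKM T := Projective.π (FKM T)

lemma Fc_surj : Function.Surjective (Fc T) :=
  (ModuleCat.epi_iff_surjective (Fc T)).mp (inferInstanceAs (Epi (Projective.π (FKM T))))

/-- the standard first syzygy map -/
def Fσ : FP₁ T ⟶ FP₀ T := Fc T ≫ (show FKM T ⟶ FP₀ T from ModuleCat.ofHom (FK T).subtype)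

lemma Fσ_range : LinearMap.range (Fσ T).hom = LinearMap.ker (Fπ T).hom := by
  show LinearMap.range (Fc T ≫ _).hom = _
  rw [ModuleCat.hom_comp, LinearMap.range_comp, LinearMap.range_eq_top.mpr (Fc_surj T),
    Submodule.map_top]
  exact Submodule.range_subtype (FK T)

/-- `Ext¹(T, I) = 0` for injective `I`. -/
lemma extVanish_one_of_injective (I : ModuleCat.{u} R) (hI : Injective I) :
    ExtVanish 1 T I := by
  rw [extVanish_one_iff (Fσ T) (Fπ T) (Fπ_surj T) (Fσ_range T)]
  intro g hg
  have hc' : Function.Surjective (Fσ T).hom.rangeRestrict :=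
    LinearMap.surjective_rangeRestrict (Fσ T).hom
  obtain ⟨t, ht⟩ := exists_factor_of_surjective (R := R) (Fσ T).hom.rangeRestrict hc' g.hom
    (by
      intro a ha
      refine hg a ?_
      have := congrArg Subtype.val ha
      exact this)
  haveI := hI
  haveI : Mono (show ModuleCat.of R ↥(LinearMap.range (Fσ T).hom) ⟶ FP₀ T from
      ModuleCat.ofHom (LinearMap.range (Fσ T).hom).subtype) :=
    (ModuleCat.mono_iff_injective _).mpr (Submodule.injective_subtype _)
  set sub : ModuleCat.of R ↥(LinearMap.range (Fσ T).hom) ⟶ FP₀ T :=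
    ModuleCat.ofHom (LinearMap.range (Fσ T).hom).subtype with hsub
  set h : FP₀ T ⟶ I := Injective.factorThru
    (show ModuleCat.of R ↥(LinearMap.range (Fσ T).hom) ⟶ I from ModuleCat.ofHom t) sub with hh
  have hcomm : sub ≫ h = ModuleCat.ofHom t := Injective.comp_factorThru _ _
  refine ⟨h, ?_⟩
  ext x
  show h (Fσ T x) = g x
  have e1 : Fσ T x = sub ((Fσ T).hom.rangeRestrict x) := rfl
  rw [e1]
  have e2 : h (sub ((Fσ T).hom.rangeRestrict x)) = t ((Fσ T).hom.rangeRestrict x) :=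
    ConcreteCategory.congr_hom hcomm ((Fσ T).hom.rangeRestrict x)
  rw [e2, ht x]

variable {T}

lemma memGen_of_injective (ht : IsTilting T) (I : ModuleCat.{u} R) (hI : Injective I) :
    MemGen T I := (ht I).mpr (extVanish_one_of_injective T I hI)

/-- tilting modules are sincere -/
lemma forward_sincere (ht : IsTilting T) : Sincere T := by
  intro P hP hPnt
  haveI := hP
  set I : ModuleCat.{u} R := Injective.under P with hI
  set ι : P ⟶ I := Injective.ι P with hι
  obtain ⟨J, f, hf⟩ := memGen_of_injective ht I inferInstance
  haveI : Epi f := (ModuleCat.epi_iff_surjective f).mpr hf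
  set u : P ⟶ copies T J := Projective.factorThru ι f with hu
  have hcomm : u ≫ f = ι := Projective.factorThru_comp ι f
  obtain ⟨x, hx⟩ := exists_ne (0 : P)
  have hιx : ι x ≠ 0 := by
    intro h0
    refine hx ?_
    have hinj : Function.Injective ι := (ModuleCat.mono_iff_injective ι).mp inferInstance
    exact hinj (by rw [h0, map_zero])
  have hux : u x ≠ 0 := by
    intro h0
    refine hιx ?_
    have : f (u x) = ι x := ConcreteCategory.congr_hom hcomm x
    rw [h0, map_zero] at this
    exact this.symm
  obtain ⟨j, hj⟩ : ∃ j : J,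
      (u ≫ (show copies T J ⟶ T from ModuleCat.ofHom (Finsupp.lapply j))) x ≠ 0 := by
    by_contra hall
    push_neg at hall
    exact hux (Finsupp.ext hall)
  exact ⟨u ≫ (show copies T J ⟶ T from ModuleCat.ofHom (Finsupp.lapply j)), fun h0 => hj (by rw [h0]; rfl)⟩

/-- tilting modules satisfy `Ext² = 0` everywhere -/
lemma forward_ext2 (ht : IsTilting T) (X : ModuleCat.{u} R) : ExtVanish 2 T X := by
  rw [extVanish_two_iff (Fσ T) (Fπ T) (Fπ_surj T) (Fσ_range T)]
  intro g
  have hC : True := trivial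
  set I : ModuleCat.{u} R := Injective.under X with hIdef
  set ι : X ⟶ I := Injective.ι X with hιdef
  have hιinj : Function.Injective ι := (ModuleCat.mono_iff_injective ι).mp inferInstance
  haveI : Mono (show ModuleCat.of R ↥(LinearMap.ker (Fσ T).hom) ⟶ FP₁ T from
      ModuleCat.ofHom (LinearMap.ker (Fσ T).hom).subtype) :=
    (ModuleCat.mono_iff_injective _).mpr (Submodule.injective_subtype _)
  set sub : ModuleCat.of R ↥(LinearMap.ker (Fσ T).hom) ⟶ FP₁ T :=
    ModuleCat.ofHom (LinearMap.ker (Fσ T).hom).subtype with hsubdef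
  set h : FP₁ T ⟶ I := Injective.factorThru (g ≫ ι) sub with hhdef
  have hcomm : sub ≫ h = g ≫ ι := Injective.comp_factorThru _ _
  set Xq : ModuleCat.{u} R := ModuleCat.of R (I ⧸ LinearMap.range ι.hom) with hXq
  set p : I ⟶ Xq := ModuleCat.ofHom (LinearMap.range ι.hom).mkQ with hp
  have hpsurj : Function.Surjective p := Submodule.mkQ_surjective _
  have hXqGen : MemGen T Xq :=
    memGen_of_surjective (memGen_of_injective ht I inferInstance) p hpsurj
  have hXqE1 := (ht Xq).mp hXqGen
  rw [extVanish_one_iff (Fσ T) (Fπ T) (Fπ_surj T) (Fσ_range T)] at hXqE1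
  obtain ⟨m, hm⟩ := hXqE1 (h ≫ p) (by
    intro y hy
    show p (h y) = 0
    have hy' : h y = ι (g ⟨y, hy⟩) := by
      have := ConcreteCategory.congr_hom hcomm (⟨y, hy⟩ : ↥(LinearMap.ker (Fσ T).hom))
      exact this
    rw [hy']
    show (LinearMap.range ι.hom).mkQ (ι (g ⟨y, hy⟩)) = 0
    rw [Submodule.mkQ_apply, Submodule.Quotient.mk_eq_zero]
    exact LinearMap.mem_range_self ι.hom _)
  haveI : Epi p := (ModuleCat.epi_iff_surjective p).mpr hpsurj
  set mt : FP₀ T ⟶ I := Projective.factorThru m p with hmt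
  have hmtp : mt ≫ p = m := Projective.factorThru_comp m p
  set h' : FP₁ T ⟶ I := h - Fσ T ≫ mt with hh'
  have hmem : ∀ y : FP₁ T, h' y ∈ LinearMap.range ι.hom := by
    intro y
    have : p (h' y) = 0 := by
      have e1 : h' y = h y - mt (Fσ T y) := rfl
      rw [e1, map_sub]
      have e2 : p (mt (Fσ T y)) = m (Fσ T y) := ConcreteCategory.congr_hom hmtp (Fσ T y)
      have e3 : p (h y) = m (Fσ T y) := (ConcreteCategory.congr_hom hm y).symm
      rw [e2, e3, sub_self]
    have : h' y ∈ LinearMap.ker (LinearMap.range ι.hom).mkQ := this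
    rwa [Submodule.ker_mkQ] at this
  set t0 : FP₁ T →ₗ[R] ↥(LinearMap.range ι.hom) :=
    LinearMap.codRestrict (LinearMap.range ι.hom) h'.hom hmem with ht0
  set e := LinearEquiv.ofInjective ι.hom hιinj with he
  set t : FP₁ T →ₗ[R] X :=
    { toFun := fun y => e.symm (t0 y)
      map_add' := fun a b => by
        show e.symm (t0 (a + b)) = e.symm (t0 a) + e.symm (t0 b)
        rw [map_add, map_add]
      map_smul' := fun r a => by
        show e.symm (t0 (r • a)) = r • e.symm (t0 a)
        rw [map_smul, map_smul] } with htdef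
  refine ⟨ModuleCat.ofHom t, ?_⟩
  intro x
  apply hιinj
  show ι (e.symm (t0 x.1)) = ι (g x)
  have e4 : ι (e.symm (t0 x.1)) = (e (e.symm (t0 x.1)) : I) := rfl
  rw [e4, e.apply_symm_apply]
  show h' x.1 = ι (g x)
  have e5 : h' x.1 = h x.1 - mt (Fσ T x.1) := rfl
  have e6 : Fσ T x.1 = 0 := x.2
  have e7 : h x.1 = ι (g x) := ConcreteCategory.congr_hom hcomm x
  rw [e5, e6, map_zero, sub_zero, e7]

end Forward


section Silting

lemma projective_of_retract {K' P : ModuleCat.{u} R} (hP : Projective P)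
    (s : K' ⟶ P) (r : P ⟶ K') (hsr : s ≫ r = 𝟙 K') : Projective K' := by
  haveI := hP
  refine ⟨fun f e he => ?_⟩
  refine ⟨s ≫ Projective.factorThru (r ≫ f) e, ?_⟩
  rw [Category.assoc, Projective.factorThru_comp, ← Category.assoc, hsr, Category.id_comp]

variable {T : ModuleCat.{u} R}

lemma forward_K_projective (ht : IsTilting T) : Projective (FKM T) := by
  have h2 := (extVanish_two_iff (Fσ T) (Fπ T) (Fπ_surj T) (Fσ_range T)).mp
    (forward_ext2 ht (ModuleCat.of R ↥(LinearMap.ker (Fσ T).hom)))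
  obtain ⟨h, hh⟩ := h2 (𝟙 (ModuleCat.of R ↥(LinearMap.ker (Fσ T).hom)))
  set sub : ModuleCat.of R ↥(LinearMap.ker (Fσ T).hom) ⟶ FP₁ T :=
    ModuleCat.ofHom (LinearMap.ker (Fσ T).hom).subtype with hsubdef
  set S : FP₁ T ⟶ FP₁ T := 𝟙 (FP₁ T) - h ≫ sub with hSdef
  have hkk : ∀ y : FP₁ T, Fc T y = 0 → Fσ T y = 0 := by
    intro y hy
    show ((FK T).subtype) (Fc T y) = 0
    rw [hy]; rfl
  have hkk' : ∀ y : FP₁ T, Fσ T y = 0 → Fc T y = 0 := by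
    intro y hy
    apply Subtype.ext
    exact hy
  have hSkill : ∀ y : FP₁ T, Fc T y = 0 → S y = 0 := by
    intro y hy
    have hymem : y ∈ LinearMap.ker (Fσ T).hom := hkk y hy
    have e1 : S y = y - sub (h y) := rfl
    have e2 : h y = ⟨y, hymem⟩ := hh ⟨y, hymem⟩
    rw [e1, e2]
    show y - y = 0
    rw [sub_self]
  obtain ⟨t, htc⟩ := exists_factor_of_surjective (R := R) (Fc T).hom
    (Fc_surj T) S.hom hSkill
  have hretr : (show FKM T ⟶ FP₁ T from ModuleCat.ofHom t) ≫ Fc T = 𝟙 (FKM T) := by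
    apply ModuleCat.hom_ext
    apply LinearMap.ext
    intro k
    obtain ⟨y, rfl⟩ := Fc_surj T k
    show Fc T (t (Fc T y)) = Fc T y
    rw [htc y]
    have e1 : S.hom y = y - sub (h y) := rfl
    rw [e1, map_sub]
    have e2 : Fc T (sub (h y)) = 0 := hkk' _ (h y).2
    rw [e2, sub_zero]
  exact projective_of_retract (inferInstanceAs (Projective (FP₁ T)))
    (show FKM T ⟶ FP₁ T from ModuleCat.ofHom t) (Fc T) hretr

lemma forward_silting (ht : IsTilting T) : IsSilting T := by
  haveI hKproj := forward_K_projective ht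
  refine ⟨FKM T, FP₀ T, (show FKM T ⟶ FP₀ T from ModuleCat.ofHom (FK T).subtype), Fπ T, hKproj,
    inferInstance, Fπ_surj T, ?_, ?_⟩
  · show LinearMap.range (FK T).subtype = LinearMap.ker (Fπ T).hom
    rw [Submodule.range_subtype]
    rfl
  · intro X
    have hchar := extVanish_one_iff (T := T) (M := X)
      (show FKM T ⟶ FP₀ T from ModuleCat.ofHom (FK T).subtype) (Fπ T) (Fπ_surj T)
      (by show LinearMap.range (FK T).subtype = _; rw [Submodule.range_subtype]; rfl)
    constructor
    · intro hX
      intro g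
      refine hchar.mp ((ht X).mp hX) g ?_
      intro x hx
      have hx0 : x = 0 := Subtype.ext hx
      rw [hx0, map_zero]
    · intro hX
      exact (ht X).mpr (hchar.mpr (fun g _ => hX g))

end Silting

section Converse

variable {T : ModuleCat.{u} R}

lemma converse_tilting (hR : IsPerfect R) (hs : Sincere T) (hsil : IsSilting T)
    (hE2 : ∀ X : ModuleCat.{u} R, MemGen T X → ExtVanish 2 T X) : IsTilting T := by
  obtain ⟨P₁, P₀, σ, π, hp1, hp0, hπ, hσπ, hD⟩ := hsil
  haveI := hp1
  haveI := hp0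
  -- every map from the kernel of σ to a generated module vanishes
  have homC : ∀ X : ModuleCat.{u} R, MemGen T X →
      ∀ f : ModuleCat.of R ↥(LinearMap.ker σ.hom) ⟶ X, f = 0 := by
    intro X hX f
    obtain ⟨h, hh⟩ := (extVanish_two_iff σ π hπ hσπ).mp (hE2 X hX) f
    obtain ⟨h₂, hh₂⟩ := (hD X).mp hX h
    apply ModuleCat.hom_ext
    apply LinearMap.ext
    intro x
    have e1 : f x = h x.1 := (hh x).symm
    have e2 : h x.1 = h₂ (σ x.1) := (ConcreteCategory.congr_hom hh₂ x.1).symm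
    have e3 : σ x.1 = 0 := x.2
    exact e1.trans (e2.trans (by rw [e3, map_zero]; rfl))
  -- the kernel of σ is zero
  have hker : LinearMap.ker σ.hom = ⊥ := by
    by_contra hne
    obtain ⟨x0, hx0m, hx0⟩ := (Submodule.ne_bot_iff _).mp hne
    obtain ⟨Q, q, hQp, hqs, hqmin⟩ := hR.1 (ModuleCat.of R ↥(LinearMap.ker σ.hom))
    haveI := hQp
    have hQnt : Nontrivial Q := by
      obtain ⟨y, hy⟩ := hqs ⟨x0, hx0m⟩
      refine ⟨y, 0, fun h0 => hx0 ?_⟩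
      rw [h0, map_zero] at hy
      exact (congrArg Subtype.val hy).symm
    obtain ⟨φ, hφ⟩ := hs Q hQp hQnt
    set W : Submodule R T := Submodule.map φ.hom (LinearMap.ker q.hom) with hW
    set Z : ModuleCat.{u} R := ModuleCat.of R (T ⧸ W) with hZ
    have hZgen : MemGen T Z := memGen_quotient T W
    set ψ : Q ⟶ Z := φ ≫ (show T ⟶ Z from ModuleCat.ofHom W.mkQ) with hψ
    have hψkill : ∀ y : Q, q y = 0 → ψ y = 0 := by
      intro y hy
      show W.mkQ (φ y) = 0
      rw [Submodule.mkQ_apply, Submodule.Quotient.mk_eq_zero]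
      exact Submodule.mem_map_of_mem (LinearMap.mem_ker.mpr hy)
    obtain ⟨t, htq⟩ := exists_factor_of_surjective (R := R)
      q.hom hqs ψ.hom hψkill
    have ht0 : (show ModuleCat.of R ↥(LinearMap.ker σ.hom) ⟶ Z from ModuleCat.ofHom t) = 0 := homC Z hZgen _
    have hφW : ∀ y : Q, φ y ∈ W := by
      intro y
      have hψy : ψ y = 0 := by
        rw [← htq y]
        exact ConcreteCategory.congr_hom ht0 (q y)
      have : W.mkQ (φ y) = 0 := hψy
      rwa [Submodule.mkQ_apply, Submodule.Quotient.mk_eq_zero] at this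
    have hsurj : Function.Surjective
        ((show ModuleCat.of R ↥(LinearMap.ker φ.hom) ⟶ Q from ModuleCat.ofHom (LinearMap.ker φ.hom).subtype) ≫ q) := by
      intro z
      obtain ⟨y, hy⟩ := hqs z
      obtain ⟨w, hw, hwe⟩ := Submodule.mem_map.mp (hφW y)
      refine ⟨⟨y - w, ?_⟩, ?_⟩
      · show φ (y - w) = 0
        rw [map_sub, hwe, sub_self]
      · show q (y - w) = z
        rw [map_sub, show q w = 0 from hw, sub_zero, hy]
    have hsub := hqmin _ _ hsurj
    have hkerφtop : LinearMap.ker φ.hom = ⊤ := by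
      rw [Submodule.eq_top_iff']
      intro y
      obtain ⟨⟨w, hw⟩, hwy⟩ := hsub y
      have : w = y := hwy
      rwa [← this]
    exact hφ (ModuleCat.hom_ext ((LinearMap.ker_eq_top.mp hkerφtop).trans ModuleCat.hom_zero.symm))
  -- conclude
  intro X
  have hchar := extVanish_one_iff (M := X) σ π hπ hσπ
  constructor
  · intro hX
    exact hchar.mpr (fun g _ => (hD X).mp hX g)
  · intro hX
    refine (hD X).mpr ?_
    intro g
    refine hchar.mp hX g ?_
    intro x hx
    have hx' : x ∈ LinearMap.ker σ.hom := hx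
    rw [hker] at hx'
    have hx0 : x = 0 := hx'
    rw [hx0, map_zero]

end Converse


end StmtAux
end

/-- over a perfect ring, `T` is tilting iff `T` is sincere silting and
`Gen T ⊆ Ker Ext²(T,-)`. -/
theorem stmt_15 {R : Type u} [Ring R] (hR : IsPerfect R) (T : ModuleCat.{u} R) :
    IsTilting T ↔
      (Sincere T ∧ IsSilting T ∧
        ∀ X : ModuleCat.{u} R, MemGen T X → ExtVanish 2 T X) := by
  constructor
  · intro ht
    exact ⟨StmtAux.forward_sincere ht, StmtAux.forward_silting ht,
      fun X _ => StmtAux.forward_ext2 ht X⟩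
  · rintro ⟨hs, hsil, hE2⟩
    exact StmtAux.converse_tilting hR hs hsil hE2
end

section
/- Let R be a ring and T an R-module of finite projective dimension n such that Ext^i_R(T, T^(J)) = 0 for all sets J and all i ≥ 1. If Gen T = Pres T, then Ext^i_R(T,X) = 0 for all X ∈ Gen T and all i ≥ 1. -/
open CategoryTheory CategoryTheory.Limits

universe u

noncomputable section StmtSixteenAux

variable {R : Type u} [Ring R]

namespace StmtSixteen

lemma subsingleton_of_isZero {M : ModuleCat ℤ} (h : IsZero M) : Subsingleton M := by
  have e := h.eq_of_src (𝟙 M) 0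
  exact ⟨fun a b => by
    calc a = (𝟙 M) a := rfl
    _ = (0 : M ⟶ M) a := by rw [e]
    _ = (𝟙 M) b := by rw [e]; rfl
    _ = b := rfl⟩

lemma isZero_of_subsingleton' {M : ModuleCat ℤ} (h : Subsingleton M) : IsZero M :=
  @ModuleCat.isZero_of_subsingleton _ _ M h

/-- the post-composition chain map on `linearYonedaObj`. -/
def postcomp (P : ChainComplex (ModuleCat.{u} R) ℕ) {Y Y' : ModuleCat.{u} R} (f : Y ⟶ Y') :
    P.linearYonedaObj ℤ Y ⟶ P.linearYonedaObj ℤ Y' where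
  f j := ModuleCat.ofHom
    (AddMonoidHom.toIntLinearMap
      (AddMonoidHom.mk' (fun (h : P.X j ⟶ Y) => h ≫ f)
        (fun a b => Preadditive.add_comp _ _ _ _ _ _)))
  comm' i j _ := by
    ext (h : P.X i ⟶ Y)
    change (P.d j i ≫ h) ≫ f = P.d j i ≫ (h ≫ f)
    simp

lemma sandwich (T T₀ X : ModuleCat.{u} R) (g : T₀ ⟶ X) (hg : Function.Surjective g)
    (i : ℕ) (h0 : ExtVanish i T T₀)
    (h1 : ExtVanish (i+1) T (ModuleCat.of R (LinearMap.ker g.hom))) :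
    ExtVanish i T X := by
  classical
  set K : ModuleCat.{u} R := ModuleCat.of R (LinearMap.ker g.hom) with hK
  let ι : K ⟶ T₀ := ModuleCat.ofHom (LinearMap.ker g.hom).subtype
  have hιg : ι ≫ g = 0 := by
    ext ⟨x, hx⟩
    exact hx
  let P := ProjectiveResolution.of T
  let S : ShortComplex (CochainComplex (ModuleCat ℤ) ℕ) :=
    ShortComplex.mk (postcomp P.complex ι) (postcomp P.complex g) (by
      ext j (h : P.complex.X j ⟶ K)
      change (h ≫ ι) ≫ g = 0
      rw [Category.assoc, hιg, comp_zero])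
  have hMono : Mono ι := (ModuleCat.mono_iff_injective _).2 (Submodule.injective_subtype _)
  have hEpi : Epi g := (ModuleCat.epi_iff_surjective _).2 hg
  have hSE : S.ShortExact := by
    apply HomologicalComplex.shortExact_of_degreewise_shortExact
    intro j
    refine ShortComplex.ShortExact.mk' ?_ ?_ ?_
    · rw [ShortComplex.moduleCat_exact_iff]
      intro (h : P.complex.X j ⟶ T₀) hh
      have hh' : h ≫ g = 0 := hh
      refine ⟨ModuleCat.ofHom (LinearMap.codRestrict (LinearMap.ker g.hom) h.hom (fun a => ?_)), rfl⟩
      exact LinearMap.congr_fun (congrArg ModuleCat.Hom.hom hh') a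
    · rw [ModuleCat.mono_iff_injective]
      intro a b hab
      exact (cancel_mono ι).1 hab
    · rw [ModuleCat.epi_iff_surjective]
      intro (e : P.complex.X j ⟶ X)
      exact ⟨Projective.factorThru e g, Projective.factorThru_comp e g⟩
  have hex := hSE.homology_exact₃ i (i+1) (by simp)
  have hz1 : IsZero (S.X₂.homology i) :=
    (isZero_of_subsingleton' h0).of_iso (P.isoExt i T₀).symm
  have hz3 : IsZero (S.X₁.homology (i+1)) :=
    (isZero_of_subsingleton' h1).of_iso (P.isoExt (i+1) K).symm
  have hz2 : IsZero (S.X₃.homology i) := by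
    apply hex.isZero_X₂
    · exact hz1.eq_of_src _ _
    · exact hz3.eq_of_tgt _ _
  exact subsingleton_of_isZero (hz2.of_iso (P.isoExt i X))

lemma extVanish_of_retract {T Y Z : ModuleCat.{u} R} {s : Y ⟶ Z} {r : Z ⟶ Y}
    (hsr : s ≫ r = 𝟙 Y) (i : ℕ) (h : ExtVanish i T Z) : ExtVanish i T Y := by
  set F := (Ext ℤ (ModuleCat.{u} R) i).obj (Opposite.op T)
  have hmap : F.map s ≫ F.map r = 𝟙 (F.obj Y) := by
    rw [← F.map_comp, hsr, F.map_id]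
  refine ⟨fun a b => ?_⟩
  have : ∀ x : F.obj Y, F.map r (F.map s x) = x := fun x => by
    have := congrArg (fun (φ : F.obj Y ⟶ F.obj Y) => φ x) hmap
    simpa using this
  rw [← this a, ← this b]
  congr 1
  exact h.elim _ _

lemma extVanish_of_isZero_res (T M : ModuleCat.{u} R) (P : ProjectiveResolution T) (i : ℕ)
    (hz : IsZero (P.complex.X i)) : ExtVanish i T M := by
  apply subsingleton_of_isZero
  refine IsZero.of_iso ?_ (P.isoExt i M)
  rw [← HomologicalComplex.exactAt_iff_isZero_homology, HomologicalComplex.exactAt_iff]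
  apply ShortComplex.exact_of_isZero_X₂
  apply isZero_of_subsingleton'
  exact ⟨fun a b => hz.eq_of_src a b⟩

def spliceX (P : ModuleCat.{u} R) (Q : ChainComplex (ModuleCat.{u} R) ℕ) : ℕ → ModuleCat.{u} R
  | 0 => P
  | (j+1) => Q.X j

def splice (K P T : ModuleCat.{u} R) (ι : K ⟶ P) (f : P ⟶ T) (hP : Projective P)
    (hf : Function.Surjective f)
    (hιinj : Function.Injective ι)
    (hexact : LinearMap.range ι.hom = LinearMap.ker f.hom)
    (Q : ProjectiveResolution K) : ProjectiveResolution T := by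
  have hιf : ι ≫ f = 0 := by
    ext x
    have : ι.hom x ∈ LinearMap.range ι.hom := LinearMap.mem_range_self _ x
    rw [hexact] at this
    exact this
  let d : ∀ j : ℕ, spliceX P Q.complex (j+1) ⟶ spliceX P Q.complex j := fun j =>
    match j with
    | 0 => (Q.π.f 0 ≫ ι : Q.complex.X 0 ⟶ P)
    | (j+1) => Q.complex.d (j+1) j
  have sq : ∀ j : ℕ, d (j+1) ≫ d j = 0 := by
    intro j
    match j with
    | 0 =>
      show Q.complex.d 1 0 ≫ (Q.π.f 0 ≫ ι) = 0
      erw [← Category.assoc, Q.complex_d_comp_π_f_zero, zero_comp]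
    | (j+1) =>
      show Q.complex.d (j+2) (j+1) ≫ Q.complex.d (j+1) j = 0
      exact Q.complex.d_comp_d _ _ _
  let C : ChainComplex (ModuleCat.{u} R) ℕ := ChainComplex.of (spliceX P Q.complex) d sq
  have hd10 : C.d 1 0 = (Q.π.f 0 ≫ ι : Q.complex.X 0 ⟶ P) := ChainComplex.of_d _ _ 0
  refine
    { complex := C
      projective := fun n => by
        match n with
        | 0 => exact hP
        | (n+1) => exact Q.projective n
      π := (ChainComplex.toSingle₀Equiv C T).symm ⟨f, by
        erw [hd10, Category.assoc, hιf, comp_zero]⟩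
      quasiIso := ⟨fun n => ?_⟩ }
  have hπ0 : ((ChainComplex.toSingle₀Equiv C T).symm ⟨f, by
        erw [hd10, Category.assoc, hιf, comp_zero]⟩).f 0 = f :=
    ChainComplex.toSingle₀Equiv_symm_apply_f_zero _ _
  have hπ0epi : Function.Surjective (Q.π.f 0) := by
    rw [← ModuleCat.epi_iff_surjective]
    infer_instance
  have hex0 : (ShortComplex.mk (Q.π.f 0 ≫ ι : Q.complex.X 0 ⟶ P) f
      (by erw [Category.assoc, hιf, comp_zero])).Exact := by
    rw [ShortComplex.moduleCat_exact_iff]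
    intro x hx
    have hx' : x ∈ LinearMap.ker f.hom := hx
    rw [← hexact] at hx'
    obtain ⟨k, hk⟩ := hx'
    obtain ⟨q, hq⟩ := hπ0epi k
    refine ⟨q, ?_⟩
    show ι (Q.π.f 0 q) = x
    rw [hq, hk]
  have hex1 : (ShortComplex.mk (Q.complex.d 1 0) (Q.π.f 0 ≫ ι : Q.complex.X 0 ⟶ P)
      (by erw [← Category.assoc, Q.complex_d_comp_π_f_zero, zero_comp])).Exact := by
    rw [ShortComplex.moduleCat_exact_iff]
    intro x hx
    have hx' : ι ((Q.π.f 0) x) = 0 := hx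
    have hx'' : (Q.π.f 0) x = 0 := by
      apply hιinj
      rw [hx']
      exact (map_zero _).symm
    have := Q.exact₀
    rw [ShortComplex.moduleCat_exact_iff] at this
    exact this x hx''
  match n with
  | 0 =>
    rw [ChainComplex.quasiIsoAt₀_iff, ShortComplex.quasiIso_iff_of_zeros']
    · refine (ShortComplex.exact_and_epi_g_iff_of_iso ?_).2
        ⟨hex0, (ModuleCat.epi_iff_surjective f).2 hf⟩
      refine ShortComplex.isoMk (Iso.refl _) (Iso.refl _) (Iso.refl _) ?_ ?_
      · dsimp
        rfl
      · dsimp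
        rfl
    all_goals rfl
  | (n+1) =>
    rw [quasiIsoAt_iff_exactAt']
    · rw [HomologicalComplex.exactAt_iff' _ (n+2) (n+1) n (by simp) (by simp)]
      match n with
      | 0 =>
        refine (ShortComplex.exact_iff_of_iso ?_).2 hex1
        refine ShortComplex.isoMk (Iso.refl _) (Iso.refl _) (Iso.refl _) ?_ ?_
        · dsimp
          erw [Category.id_comp]
        · dsimp
          rfl
      | (n+1) =>
        refine (ShortComplex.exact_iff_of_iso ?_).2 (Q.exact_succ n)
        refine ShortComplex.isoMk (Iso.refl _) (Iso.refl _) (Iso.refl _) ?_ ?_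
        · dsimp
          erw [Category.id_comp]
          exact (ChainComplex.of_d (spliceX P Q.complex) d (n+2)).symm
        · dsimp
          erw [Category.id_comp]
          exact (ChainComplex.of_d (spliceX P Q.complex) d (n+1)).symm
    · apply ChainComplex.exactAt_succ_single_obj

lemma splice_X_succ (K P T : ModuleCat.{u} R) (ι : K ⟶ P) (f : P ⟶ T) (hP : Projective P)
    (hf : Function.Surjective f) (hιinj : Function.Injective ι)
    (hexact : LinearMap.range ι.hom = LinearMap.ker f.hom)
    (Q : ProjectiveResolution K) (j : ℕ) :
    (splice K P T ι f hP hf hιinj hexact Q).complex.X (j+1) = Q.complex.X j := rfl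

lemma exists_bounded_res :
    ∀ (n : ℕ) (T : ModuleCat.{u} R), PdLE n T →
      ∃ P : ProjectiveResolution T, ∀ i : ℕ, n < i → IsZero (P.complex.X i)
  | 0, T, h => by
    have : Projective T := h
    exact ⟨ProjectiveResolution.self T, fun i hi =>
      HomologicalComplex.isZero_single_obj_X _ 0 T i (by omega)⟩
  | (n+1), T, h => by
    obtain ⟨P, f, hproj, hsurj, hker⟩ := h
    obtain ⟨Q, hQ⟩ := exists_bounded_res n _ hker
    refine ⟨splice _ P T (ModuleCat.ofHom (LinearMap.ker f.hom).subtype : ModuleCat.of R (LinearMap.ker f.hom) ⟶ P) f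
      hproj hsurj (Submodule.injective_subtype _) (Submodule.range_subtype _) Q, ?_⟩
    intro i hi
    match i, hi with
    | (i+1), hi =>
      rw [splice_X_succ]
      exact hQ i (by omega)

lemma extVanish_of_pd (n : ℕ) (T M : ModuleCat.{u} R) (h : PdLE n T) (i : ℕ) (hi : n < i) :
    ExtVanish i T M := by
  obtain ⟨P, hP⟩ := exists_bounded_res n T h
  exact extVanish_of_isZero_res T M P i (hP i hi)

end StmtSixteen

end StmtSixteenAux

/-- a self-orthogonal module of finite projective dimension with
`Gen T = Pres T` satisfies `Gen T ⊆ Ker Ext^{i≥1}(T,-)`. -/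
theorem stmt_16 {R : Type u} [Ring R] (T : ModuleCat.{u} R) (n : ℕ)
    (hpd : PdLE n T)
    (hself : ∀ (J : Type u) (i : ℕ), 1 ≤ i → ExtVanish i T (copies T J))
    (hgp : ∀ X : ModuleCat.{u} R, MemGen T X ↔ MemPres T X) :
    ∀ X : ModuleCat.{u} R, MemGen T X → ∀ i : ℕ, 1 ≤ i → ExtVanish i T X := by
  have key : ∀ (k i : ℕ) (X : ModuleCat.{u} R), 1 ≤ i → n + 1 ≤ i + k → MemGen T X →
      ExtVanish i T X := by
    intro k
    induction k with
    | zero =>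
      intro i X hi hik _
      exact StmtSixteen.extVanish_of_pd n T X hpd i (by omega)
    | succ k ih =>
      intro i X hi hik hX
      obtain ⟨T₁, T₀, f, g, h1, h0, hg, hrange⟩ := (hgp X).1 hX
      -- `T₀ ∈ Add T` gives vanishing at `T₀`
      obtain ⟨J₀, s₀, r₀, hsr₀⟩ := h0
      have hT₀ : ExtVanish i T T₀ :=
        StmtSixteen.extVanish_of_retract hsr₀ i (hself J₀ i hi)
      -- the kernel of `g` is in `Gen T`
      have hK : MemGen T (ModuleCat.of R (LinearMap.ker g.hom)) := by
        obtain ⟨J₁, s₁, r₁, hsr₁⟩ := h1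
        have hr₁ : Function.Surjective r₁ := by
          intro y
          refine ⟨s₁ y, ?_⟩
          have := congrArg (fun (φ : T₁ ⟶ T₁) => φ y) hsr₁
          simpa using this
        refine ⟨J₁, r₁ ≫ (ModuleCat.ofHom (LinearMap.codRestrict (LinearMap.ker g.hom) f.hom
          (fun a => by rw [← hrange]; exact LinearMap.mem_range_self _ a)) :
            T₁ ⟶ ModuleCat.of R (LinearMap.ker g.hom)), ?_⟩
        have hf' : Function.Surjective (LinearMap.codRestrict (LinearMap.ker g.hom) f.hom
            (fun a => by rw [← hrange]; exact LinearMap.mem_range_self _ a)) := by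
          rintro ⟨y, hy⟩
          rw [← hrange] at hy
          obtain ⟨x, hx⟩ := hy
          exact ⟨x, Subtype.ext hx⟩
        intro y
        obtain ⟨t, ht⟩ := hf' y
        obtain ⟨c, hc⟩ := hr₁ t
        refine ⟨c, ?_⟩
        rw [ConcreteCategory.comp_apply, hc]
        exact ht
      have hKv : ExtVanish (i+1) T (ModuleCat.of R (LinearMap.ker g.hom)) :=
        ih (i+1) _ (by omega) (by omega) hK
      exact StmtSixteen.sandwich T T₀ X g hg i hT₀ hKv
  intro X hX i hi
  exact key (n+1) i X hi (by omega) hX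
end

section
/- Let R be a ring, σ : P_1 → P_0 a morphism of projective R-modules with cokernel T, and D_σ = {X : Hom_R(σ,X) is surjective}. Then every X ∈ D_σ satisfies Ext^1_R(T,X) = 0, and D_σ is closed under quotients, extensions, and direct products. -/
open CategoryTheory CategoryTheory.Limits

universe u

section AuxLemmas

open CategoryTheory

universe v

/-- Key linear-algebra lemma: given a presentation `σ : P₁ → P₀` of `T` (with `ker π_P = range σ`)
such that `Hom(σ, X)` is surjective, and any other projective presentation
`Q₁ --d₁--> Q₀ --π₀--> T → 0`, every `f : Q₁ → X` vanishing on `ker d₁` factors through `d₁`. -/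
lemma aux_lift {R : Type v} [Ring R] {P₁ P₀ X Q₀ Q₁ T : Type v}
    [AddCommGroup P₁] [Module R P₁] [AddCommGroup P₀] [Module R P₀]
    [AddCommGroup X] [Module R X] [AddCommGroup Q₀] [Module R Q₀]
    [AddCommGroup Q₁] [Module R Q₁] [AddCommGroup T] [Module R T]
    (hP₁ : Module.Projective R P₁) (hP₀ : Module.Projective R P₀)
    (hQ₀ : Module.Projective R Q₀)
    (σ : P₁ →ₗ[R] P₀) (πP : P₀ →ₗ[R] T) (π₀ : Q₀ →ₗ[R] T)
    (d₁ : Q₁ →ₗ[R] Q₀) (f : Q₁ →ₗ[R] X)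
    (hπP : Function.Surjective πP) (hπ₀ : Function.Surjective π₀)
    (hkerP : LinearMap.ker πP = LinearMap.range σ)
    (hd₁ : LinearMap.range d₁ = LinearMap.ker π₀)
    (hf : LinearMap.ker d₁ ≤ LinearMap.ker f)
    (hD : ∀ g : P₁ →ₗ[R] X, ∃ h : P₀ →ₗ[R] X, h ∘ₗ σ = g) :
    ∃ h : Q₀ →ₗ[R] X, h ∘ₗ d₁ = f := by
  haveI := hP₁; haveI := hP₀; haveI := hQ₀
  obtain ⟨e, he⟩ := Module.projective_lifting_property π₀ πP hπ₀
  obtain ⟨g, hg⟩ := Module.projective_lifting_property πP π₀ hπP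
  have he' : ∀ x, π₀ (e x) = πP x := fun x => LinearMap.congr_fun he x
  have hg' : ∀ x, πP (g x) = π₀ x := fun x => LinearMap.congr_fun hg x
  set K := LinearMap.ker π₀ with hK
  have hmem : ∀ y, d₁ y ∈ K := fun y => hd₁ ▸ LinearMap.mem_range_self d₁ y
  let d₁' : Q₁ →ₗ[R] K := d₁.codRestrict K hmem
  have hd₁'surj : Function.Surjective d₁' := by
    rintro ⟨k, hk⟩
    rw [← hd₁] at hk
    obtain ⟨y, hy⟩ := hk
    exact ⟨y, Subtype.ext hy⟩
  -- lift `e ∘ σ` through `d₁`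
  have hmem2 : ∀ x, e (σ x) ∈ K := by
    intro x
    have : σ x ∈ LinearMap.ker πP := by rw [hkerP]; exact LinearMap.mem_range_self σ x
    simp only [hK, LinearMap.mem_ker] at this ⊢
    rw [he', this]
  obtain ⟨τ, hτ⟩ := Module.projective_lifting_property d₁'
    ((e ∘ₗ σ).codRestrict K hmem2) hd₁'surj
  have hdτ : ∀ x, d₁ (τ x) = e (σ x) := by
    intro x
    have := congrArg Subtype.val (LinearMap.congr_fun hτ x)
    simpa [d₁'] using this
  -- lift `id - e ∘ g` through `d₁`
  have hmem3 : ∀ x : Q₀, ((LinearMap.id : Q₀ →ₗ[R] Q₀) - e ∘ₗ g) x ∈ K := by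
    intro x
    simp only [hK, LinearMap.mem_ker, LinearMap.sub_apply, LinearMap.id_apply,
      LinearMap.comp_apply, map_sub]
    rw [he', hg', sub_self]
  obtain ⟨ρ, hρ⟩ := Module.projective_lifting_property d₁'
    (((LinearMap.id : Q₀ →ₗ[R] Q₀) - e ∘ₗ g).codRestrict K hmem3) hd₁'surj
  have hdρ : ∀ x, d₁ (ρ x) = x - e (g x) := by
    intro x
    have := congrArg Subtype.val (LinearMap.congr_fun hρ x)
    simpa [d₁'] using this
  obtain ⟨U, hU⟩ := hD (f ∘ₗ τ)
  have hU' : ∀ x, U (σ x) = f (τ x) := fun x => LinearMap.congr_fun hU x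
  refine ⟨U ∘ₗ g + f ∘ₗ ρ, ?_⟩
  ext y
  simp only [LinearMap.comp_apply, LinearMap.add_apply]
  have hy : g (d₁ y) ∈ LinearMap.range σ := by
    rw [← hkerP, LinearMap.mem_ker, hg']
    exact hmem y
  obtain ⟨p, hp⟩ := hy
  have key : f (ρ (d₁ y) - (y - τ p)) = 0 := by
    apply hf
    simp only [LinearMap.mem_ker, map_sub, hdρ, hdτ, hp]
    abel
  rw [map_sub, map_sub, sub_eq_zero] at key
  rw [← hp, hU', key]
  abel

end AuxLemmas

/-- for a morphism `σ` of projectives with cokernel `T`, one has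
`D_σ ⊆ Ker Ext¹(T,-)`, and `D_σ` is closed under quotients, extensions and products. -/
theorem stmt_18 {R : Type u} [Ring R]
    (P₁ P₀ : ModuleCat.{u} R) (hP₁ : Projective P₁) (hP₀ : Projective P₀)
    (σ : P₁ ⟶ P₀) :
    (∀ X : ModuleCat.{u} R, MemD σ X →
        ExtVanish 1 (ModuleCat.of R (P₀ ⧸ LinearMap.range σ.hom)) X) ∧
    (∀ (X Y : ModuleCat.{u} R) (p : X ⟶ Y),
        MemD σ X → Function.Surjective p → MemD σ Y) ∧
    (∀ (A B C : ModuleCat.{u} R) (i : A ⟶ B) (p : B ⟶ C),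
        Function.Injective i → Function.Surjective p → LinearMap.range i.hom = LinearMap.ker p.hom →
        MemD σ A → MemD σ C → MemD σ B) ∧
    (∀ (ι : Type u) (X : ι → ModuleCat.{u} R),
        (∀ j : ι, MemD σ (X j)) → MemD σ (ModuleCat.of R (∀ j : ι, X j))) := by
  haveI : Projective P₀ := hP₀
  haveI : Projective P₁ := hP₁
  refine ⟨?_, ?_, ?_, ?_⟩
  · -- D_σ ⊆ Ker Ext¹(T, -)
    intro X hX
    set T : ModuleCat.{u} R := ModuleCat.of R (P₀ ⧸ LinearMap.range σ.hom) with hT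
    let Q : ProjectiveResolution T := CategoryTheory.projectiveResolution T
    have hsub : Subsingleton ((Q.complex.linearYonedaObj ℤ X).homology 1) := by
      have hex : (Q.complex.linearYonedaObj ℤ X).ExactAt 1 := by
        rw [HomologicalComplex.exactAt_iff' _ 0 1 2 (by simp) (by simp)]
        rw [ShortComplex.moduleCat_exact_iff]
        intro f hf
        dsimp [ChainComplex.linearYonedaObj] at f hf ⊢
        let f' : Q.complex.X 1 ⟶ X := f
        have hff' : f = f' := rfl
        rw [hff'] at hf ⊢
        have hf' : Q.complex.d 2 1 ≫ f' = 0 := hf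
        -- exactness facts
        have hexact₀ := (ShortComplex.moduleCat_exact_iff_range_eq_ker _).mp Q.exact₀
        have hexact₁ := (ShortComplex.moduleCat_exact_iff_range_eq_ker _).mp (Q.exact_succ 0)
        have hπ₀surj : Function.Surjective (Q.π.f 0) :=
          (ModuleCat.epi_iff_surjective _).mp inferInstance
        have hkerle : LinearMap.ker (Q.complex.d 1 0).hom ≤
            LinearMap.ker f'.hom := by
          rw [← hexact₁]
          rintro x ⟨z, rfl⟩
          exact LinearMap.congr_fun (congrArg ModuleCat.Hom.hom hf') z
        have hproj : Module.Projective R (Q.complex.X 0) :=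
          by haveI := Q.projective 0; infer_instance
        have hP₀' : Module.Projective R P₀ := by haveI := hP₀; infer_instance
        have hP₁' : Module.Projective R P₁ := by haveI := hP₁; infer_instance
        obtain ⟨h, hh⟩ := aux_lift hP₁' hP₀' hproj σ.hom (LinearMap.range σ.hom).mkQ (Q.π.f 0).hom
          (Q.complex.d 1 0).hom f'.hom (Submodule.mkQ_surjective _) hπ₀surj
          (Submodule.ker_mkQ _) hexact₀ hkerle
          (fun g => by
            obtain ⟨h, hh⟩ := hX (ModuleCat.ofHom g)
            exact ⟨h.hom, congrArg ModuleCat.Hom.hom hh⟩)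
        exact ⟨ModuleCat.ofHom h, ModuleCat.hom_ext hh⟩
      rw [HomologicalComplex.exactAt_iff_isZero_homology] at hex
      constructor
      intro a b
      have h0 : (𝟙 ((Q.complex.linearYonedaObj ℤ X).homology 1) :
          (Q.complex.linearYonedaObj ℤ X).homology 1 ⟶ _) = 0 := hex.eq_of_src _ _
      have ha : a = 0 := by
        conv_lhs => rw [← ModuleCat.id_apply _ a, h0]
        rfl
      have hb : b = 0 := by
        conv_lhs => rw [← ModuleCat.id_apply _ b, h0]
        rfl
      rw [ha, hb]
    exact Equiv.subsingleton (((forget (ModuleCat ℤ)).mapIso (Q.isoExt 1 X)).toEquiv)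
  · -- closed under quotients
    intro X Y p hX hp g
    haveI : Epi p := (ModuleCat.epi_iff_surjective p).mpr hp
    obtain ⟨h, hh⟩ := hX (Projective.factorThru g p)
    refine ⟨h ≫ p, ?_⟩
    rw [← Category.assoc, hh, Projective.factorThru_comp]
  · -- closed under extensions
    intro A B C i p hi hp hrange hA hC g
    haveI : Epi p := (ModuleCat.epi_iff_surjective p).mpr hp
    obtain ⟨h₀, hh₀⟩ := hC (g ≫ p)
    set h : P₀ ⟶ B := Projective.factorThru h₀ p with hhdef
    have hhp : h ≫ p = h₀ := Projective.factorThru_comp h₀ p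
    set δ : P₁ ⟶ B := σ ≫ h - g with hδ
    have hδp : ∀ x, p (δ x) = 0 := by
      intro x
      have : δ ≫ p = 0 := by
        rw [hδ, Preadditive.sub_comp, Category.assoc, hhp, hh₀, sub_self]
      exact LinearMap.congr_fun (congrArg ModuleCat.Hom.hom this) x
    have hδmem : ∀ x, δ x ∈ LinearMap.range i.hom := by
      intro x
      rw [hrange, LinearMap.mem_ker]
      exact hδp x
    let eA : A ≃ₗ[R] LinearMap.range i.hom := LinearEquiv.ofInjective i.hom hi
    let δ' : P₁ ⟶ A := ModuleCat.ofHom (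
      (eA.symm : LinearMap.range i.hom →ₗ[R] A) ∘ₗ
        δ.hom.codRestrict (LinearMap.range i.hom) hδmem)
    have hδ'i : ∀ x, i (δ' x) = δ x := by
      intro x
      have : eA (δ' x) = ⟨δ x, hδmem x⟩ := by
        simp only [δ', ModuleCat.hom_ofHom, LinearMap.comp_apply]
        exact eA.apply_symm_apply _
      have := congrArg Subtype.val this
      simpa [eA, LinearEquiv.ofInjective_apply] using this
    obtain ⟨k, hk⟩ := hA δ'
    refine ⟨h - k ≫ i, ?_⟩
    ext x
    have h1 : (σ ≫ (h - k ≫ i)) x = h (σ x) - i (k (σ x)) := rfl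
    have h2 : i (k (σ x)) = i (δ' x) := by
      have := LinearMap.congr_fun (congrArg ModuleCat.Hom.hom hk) x
      exact congrArg i this
    rw [h1, h2, hδ'i]
    show h (σ x) - (h (σ x) - g x) = g x
    abel
  · -- closed under products
    intro ι X hX g
    choose h hh using fun j => hX j (g ≫ ModuleCat.ofHom (LinearMap.proj j :
      (∀ j : ι, X j) →ₗ[R] X j))
    refine ⟨ModuleCat.ofHom (LinearMap.pi (fun j => (h j).hom)), ?_⟩
    ext x
    rename_i j
    exact LinearMap.congr_fun (congrArg ModuleCat.Hom.hom (hh j)) x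
end
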